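/- arXiv:2509.12413 — 5 statements merged into one kernel-verified Lean document; each statement's English description precedes it below -/
import Mathlib

section
/- Let κ_b, β_b > 0, μ_b ≥ 0, M_{b,0} ≥ 0, and let φ : [0,∞) → ℝ be continuous with 0 ≤ φ(t) ≤ 1 for all t ≥ 0. Suppose y : [0,∞) → ℝ is differentiable and satisfies y'(t) = κ_b·(φ(t)/(1+φ(t)))·(1−φ(t)) − (μ_b φ(t) + β_b)·y(t) for all t ≥ 0, with 0 ≤ y(0) ≤ M_{b,0}. Then 0 ≤ y(t) ≤ max{M_{b,0}, κ_b/β_b} for all t ≥ 0. -/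
/-!
Both bounds describe an invariant region because the vector field points inward on its
boundary: where `y < 0` the right-hand side is positive, the production term being
nonnegative, and where `y > max M_{b,0} (κ_b / β_b)` it is negative, production being at
most `κ_b` and decay at least `β_b y`. Comparing with the constant barriers `c + ε` turns
this into the bounds.
-/

open Set

theorem le_of_hasDerivWithinAt_Ici_of_deriv_neg {f f' : ℝ → ℝ} {a c : ℝ}
    (hf : ∀ x ∈ Ici a, HasDerivWithinAt f (f' x) (Ici a) x) (ha : f a ≤ c)
    (hneg : ∀ x ∈ Ici a, c < f x → f' x < 0) : ∀ x ∈ Ici a, f x ≤ c := by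
  intro b hb
  have hcont : ContinuousOn f (Icc a b) := fun x hx =>
    (hf x hx.1).continuousWithinAt.mono Icc_subset_Ici_self
  have hright : ∀ x ∈ Ico a b, HasDerivWithinAt f (f' x) (Ici x) x := fun x hx =>
    (hf x hx.1).mono (Ici_subset_Ici.2 hx.1)
  refine le_of_forall_pos_le_add fun ε hε => ?_
  refine image_le_of_deriv_right_lt_deriv_boundary hcont hright (B := fun _ => c + ε)
    (by linarith) (fun _ => hasDerivAt_const _ _) (fun x hx hfx => ?_) ⟨hb, le_rfl⟩
  exact hneg x hx.1 (by linarith)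

theorem hill_mul_one_sub_mem_Icc {p : ℝ} (hp : p ∈ Icc (0 : ℝ) 1) :
    p / (1 + p) * (1 - p) ∈ Icc (0 : ℝ) 1 := by
  obtain ⟨h0, h1⟩ := hp
  have hq : p / (1 + p) ∈ Icc (0 : ℝ) 1 :=
    ⟨by positivity, (div_le_one (by linarith)).2 (by linarith)⟩
  exact ⟨mul_nonneg hq.1 (by linarith), mul_le_one₀ hq.2 (by linarith) (by linarith)⟩

theorem bound_mmp_invariant_region_general
    (κb βb μb Mb0 : ℝ)
    (hκb : 0 < κb) (hβb : 0 < βb) (hμb : 0 ≤ μb)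
    (φ y : ℝ → ℝ)
    (hφ_range : ∀ t ∈ Set.Ici (0 : ℝ), 0 ≤ φ t ∧ φ t ≤ 1)
    (hy : ∀ t ∈ Set.Ici (0 : ℝ),
      HasDerivWithinAt y
        (κb * (φ t / (1 + φ t)) * (1 - φ t) - (μb * φ t + βb) * y t) (Set.Ici 0) t)
    (hy0_nonneg : 0 ≤ y 0) (hy0_le : y 0 ≤ Mb0) :
    ∀ t ∈ Set.Ici (0 : ℝ), 0 ≤ y t ∧ y t ≤ max Mb0 (κb / βb) := by
  have hprod : ∀ t ∈ Ici (0 : ℝ), 0 ≤ κb * (φ t / (1 + φ t)) * (1 - φ t) ∧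
      κb * (φ t / (1 + φ t)) * (1 - φ t) ≤ κb := fun t ht => by
    obtain ⟨h0, h1⟩ := hill_mul_one_sub_mem_Icc (hφ_range t ht)
    rw [mul_assoc]
    exact ⟨mul_nonneg hκb.le h0, mul_le_of_le_one_right hκb.le h1⟩
  have hrate : ∀ t ∈ Ici (0 : ℝ), βb ≤ μb * φ t + βb := fun t ht =>
    le_add_of_nonneg_left (mul_nonneg hμb (hφ_range t ht).1)
  have hκ_le : κb ≤ βb * max Mb0 (κb / βb) := by
    rw [← div_le_iff₀' hβb]
    exact le_max_right _ _
  intro t ht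
  constructor
  · have := le_of_hasDerivWithinAt_Ici_of_deriv_neg (f := fun s => -y s) (c := 0)
      (fun s hs => (hy s hs).neg) (by simpa using hy0_nonneg) (fun s hs hys => by
        nlinarith [(hprod s hs).1, hrate s hs]) t ht
    simpa using this
  · refine le_of_hasDerivWithinAt_Ici_of_deriv_neg hy (hy0_le.trans (le_max_left _ _))
      (fun s hs hys => ?_) t ht
    have hy_pos : 0 < y s := (div_pos hκb hβb).trans_le (le_max_right _ _) |>.trans hys
    nlinarith [(hprod s hs).2, mul_le_mul_of_nonneg_right (hrate s hs) hy_pos.le,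
      mul_lt_mul_of_pos_left hys hβb]

/-- invariant upper bound for the bound-MMP density y = c_b(1−φ):
if y' = κ_b·(φ/(1+φ))·(1−φ) − (μ_b φ + β_b) y with 0 ≤ φ ≤ 1 and 0 ≤ y(0) ≤ M_{b,0},
then 0 ≤ y(t) ≤ max{M_{b,0}, κ_b/β_b} for all t ≥ 0. -/
theorem bound_mmp_invariant_region
    (κb βb μb Mb0 : ℝ)
    (hκb : 0 < κb) (hβb : 0 < βb) (hμb : 0 ≤ μb) (hMb0 : 0 ≤ Mb0)
    (φ y : ℝ → ℝ)
    (hφ_cont : ContinuousOn φ (Set.Ici 0))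
    (hφ_range : ∀ t ∈ Set.Ici (0 : ℝ), 0 ≤ φ t ∧ φ t ≤ 1)
    (hy : ∀ t ∈ Set.Ici (0 : ℝ),
      HasDerivWithinAt y
        (κb * (φ t / (1 + φ t)) * (1 - φ t) - (μb * φ t + βb) * y t) (Set.Ici 0) t)
    (hy0_nonneg : 0 ≤ y 0) (hy0_le : y 0 ≤ Mb0) :
    ∀ t ∈ Set.Ici (0 : ℝ), 0 ≤ y t ∧ y t ≤ max Mb0 (κb / βb) :=
  bound_mmp_invariant_region_general κb βb μb Mb0 hκb hβb hμb φ y hφ_range hy hy0_nonneg hy0_le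
end

section
/- Let μ_b, μ_s ≥ 0, κ_b, β_b > 0, let c : [0,∞) → ℝ be continuous and nonnegative, and let M_b ≥ κ_b/β_b. Suppose φ, y : [0,∞) → ℝ are differentiable and satisfy, for all t ≥ 0, φ'(t) = −μ_b φ(t) y(t) − μ_s φ(t) c(t) and y'(t) = κ_b·(φ(t)/(1+φ(t)))·(1−φ(t)) − (μ_b φ(t) + β_b)·y(t), with initial data 0 < φ(0) ≤ 1 and 0 ≤ y(0) ≤ M_b·(1−φ(0)). Then for all t ≥ 0 one has 0 < φ(t) ≤ 1 and 0 ≤ y(t) ≤ M_b·(1−φ(t)). -/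
/-!
Positivity of `φ` comes from the solution formula `φ t = φ 0 * exp (-∫₀ᵗ (μb y + μs c))` of the
linear equation it satisfies. The bounds `φ ≤ 1` and `0 ≤ y` depend on each other and are proved
together: on `[0, T]` each of the violations `(φ - 1)⁺` and `(-y)⁺` is bounded by a constant times
the integral of the other (integrate the equation from the last time the bound held), and
Grönwall's inequality forces both to vanish. Once these bounds hold, `z = y - Mb (1 - φ)` satisfies
`z' ≤ -βb z`, because `Mb βb ≥ κb ≥ κb φ / (1 + φ)`, so `z` cannot become positive.
-/

open Set Real

section Comparison

variable {f f' g w : ℝ → ℝ} {a b : ℝ}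

theorem hasDerivWithinAt_integral_of_continuousOn (hg : ContinuousOn g (Icc a b)) {x : ℝ}
    (hx : x ∈ Ico a b) : HasDerivWithinAt (fun t ↦ ∫ s in a..t, g s) (g x) (Ici x) x := by
  have hIcc : Icc a b ∈ nhdsWithin x (Ioi x) := Icc_mem_nhdsGT_of_mem hx
  refine intervalIntegral.integral_hasDerivWithinAt_right ?_ ?_
    ((hg x (Ico_subset_Icc_self hx)).mono_of_mem_nhdsWithin hIcc)
  · exact (hg.mono (uIcc_subset_Icc (left_mem_Icc.2 (hx.1.trans hx.2.le))
      (Ico_subset_Icc_self hx))).intervalIntegrable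
  · exact (hg.stronglyMeasurableAtFilter_nhdsWithin measurableSet_Icc x).filter_mono
      (nhdsWithin_le_of_mem hIcc)

theorem continuousOn_integral_of_continuousOn (hab : a ≤ b) (hg : ContinuousOn g (Icc a b)) :
    ContinuousOn (fun t ↦ ∫ s in a..t, g s) (Icc a b) := by
  rw [← uIcc_of_le hab]
  exact intervalIntegral.continuousOn_primitive_interval (hg.integrableOn_Icc.mono_set
    (uIcc_of_le hab).subset)

theorem eq_mul_exp_integral_of_hasDerivWithinAt (hf : ContinuousOn f (Icc a b))
    (hg : ContinuousOn g (Icc a b))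
    (hf' : ∀ x ∈ Ico a b, HasDerivWithinAt f (g x * f x) (Ici x) x) :
    ∀ x ∈ Icc a b, f x = f a * exp (∫ t in a..x, g t) := by
  intro x hx
  have hconst := constant_of_has_deriv_right_zero
    (f := fun t ↦ f t * exp (-∫ s in a..t, g s))
    (hf.mul (continuousOn_integral_of_continuousOn (hx.1.trans hx.2) hg).neg.rexp)
    (fun t ht ↦ ((hf' t ht).fun_mul
      (hasDerivWithinAt_integral_of_continuousOn hg ht).fun_neg.exp).congr_deriv (by ring)) x hx
  simp only [intervalIntegral.integral_same, neg_zero, exp_zero, mul_one] at hconst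
  rw [← hconst, mul_assoc, ← exp_add, neg_add_cancel, exp_zero, mul_one]

theorem eq_zero_of_le_mul_integral {C : ℝ} (hg : ContinuousOn g (Icc a b))
    (hg0 : ∀ x ∈ Icc a b, 0 ≤ g x) (hle : ∀ x ∈ Icc a b, g x ≤ C * ∫ t in a..x, g t) :
    ∀ x ∈ Icc a b, g x = 0 := by
  intro x hx
  have hint_nonneg : ∀ y ∈ Icc a b, 0 ≤ ∫ t in a..y, g t := fun y hy ↦
    intervalIntegral.integral_nonneg hy.1 fun t ht ↦ hg0 t ⟨ht.1, ht.2.trans hy.2⟩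
  have hint_zero := eq_zero_of_abs_deriv_le_mul_abs_self_of_eq_zero_right (K := C)
    (continuousOn_integral_of_continuousOn (hx.1.trans hx.2) hg)
    (fun y hy ↦ hasDerivWithinAt_integral_of_continuousOn hg hy)
    intervalIntegral.integral_same
    (fun y hy ↦ by
      rw [Real.norm_of_nonneg (hg0 y (Ico_subset_Icc_self hy)),
        Real.norm_of_nonneg (hint_nonneg y (Ico_subset_Icc_self hy))]
      exact hle y (Ico_subset_Icc_self hy)) x hx
  exact le_antisymm (by simpa [hint_zero] using hle x hx) (hg0 x hx)

theorem max_zero_le_integral_of_deriv_le (hab : a ≤ b) (hf : ContinuousOn f (Icc a b))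
    (hf' : ∀ x ∈ Ico a b, HasDerivWithinAt f (f' x) (Ici x) x)
    (hw : ContinuousOn w (Icc a b)) (hw0 : ∀ x ∈ Icc a b, 0 ≤ w x) (ha : f a ≤ 0)
    (hle : ∀ x ∈ Ioo a b, 0 < f x → f' x ≤ w x) :
    max (f b) 0 ≤ ∫ x in a..b, w x := by
  have hint_nonneg : ∀ c ∈ Icc a b, 0 ≤ ∫ x in a..c, w x := fun c hc ↦
    intervalIntegral.integral_nonneg hc.1 fun x hx ↦ hw0 x ⟨hx.1, hx.2.trans hc.2⟩
  rcases le_or_gt (f b) 0 with hb | hb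
  · rw [max_eq_right hb]
    exact hint_nonneg b (right_mem_Icc.2 hab)
  set S := Icc a b ∩ f ⁻¹' Iic 0
  have hS : IsCompact S := isCompact_Icc.of_isClosed_subset
    (hf.preimage_isClosed_of_isClosed isClosed_Icc isClosed_Iic) inter_subset_left
  obtain ⟨⟨hat₀, ht₀b⟩, ht₀ : f (sSup S) ≤ 0⟩ := hS.sSup_mem ⟨a, left_mem_Icc.2 hab, ha⟩
  set t₀ := sSup S
  have hpos : ∀ x ∈ Ioo t₀ b, 0 < f x := fun x hx ↦ by
    by_contra! h
    exact hx.1.not_ge (le_csSup hS.bddAbove ⟨⟨hat₀.trans hx.1.le, hx.2.le⟩, h⟩)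
  have hftc : f b - f t₀ ≤ ∫ x in t₀..b, w x :=
    intervalIntegral.sub_le_integral_of_hasDeriv_right_of_le ht₀b
      (hf.mono (Icc_subset_Icc_left hat₀))
      (fun x hx ↦ (hf' x ⟨hat₀.trans hx.1.le, hx.2⟩).Ioi_of_Ici)
      ((hw.mono (Icc_subset_Icc_left hat₀)).integrableOn_Icc)
      (fun x hx ↦ hle x ⟨hat₀.trans_lt hx.1, hx.2⟩ (hpos x hx))
  have hsplit := intervalIntegral.integral_add_adjacent_intervals (μ := MeasureTheory.volume)
    ((hw.mono (Icc_subset_Icc_right ht₀b)).intervalIntegrable_of_Icc hat₀)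
    ((hw.mono (Icc_subset_Icc_left hat₀)).intervalIntegrable_of_Icc ht₀b)
  rw [max_eq_left hb.le, ← hsplit]
  linarith [hint_nonneg t₀ ⟨hat₀, ht₀b⟩]

theorem eq_zero_of_le_mul_integral_of_le_mul_integral {g₁ g₂ : ℝ → ℝ} {K L : ℝ} (hK : 0 ≤ K)
    (hL : 0 ≤ L) (hg₁ : ContinuousOn g₁ (Icc a b)) (hg₂ : ContinuousOn g₂ (Icc a b))
    (hg₁0 : ∀ x ∈ Icc a b, 0 ≤ g₁ x) (hg₂0 : ∀ x ∈ Icc a b, 0 ≤ g₂ x)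
    (hle₁ : ∀ x ∈ Icc a b, g₁ x ≤ K * ∫ t in a..x, g₂ t)
    (hle₂ : ∀ x ∈ Icc a b, g₂ x ≤ L * ∫ t in a..x, g₁ t) :
    ∀ x ∈ Icc a b, g₁ x = 0 ∧ g₂ x = 0 := by
  have hsum := eq_zero_of_le_mul_integral (g := fun x ↦ g₁ x + g₂ x) (C := K + L)
    (hg₁.add hg₂) (fun x hx ↦ add_nonneg (hg₁0 x hx) (hg₂0 x hx)) fun x hx ↦ by
      have hsub : Icc a x ⊆ Icc a b := Icc_subset_Icc_right hx.2
      have hint₁ : 0 ≤ ∫ t in a..x, g₁ t :=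
        intervalIntegral.integral_nonneg hx.1 fun t ht ↦ hg₁0 t (hsub ht)
      have hint₂ : 0 ≤ ∫ t in a..x, g₂ t :=
        intervalIntegral.integral_nonneg hx.1 fun t ht ↦ hg₂0 t (hsub ht)
      rw [intervalIntegral.integral_add ((hg₁.mono hsub).intervalIntegrable_of_Icc hx.1)
        ((hg₂.mono hsub).intervalIntegrable_of_Icc hx.1)]
      nlinarith [hle₁ x hx, hle₂ x hx]
  exact fun x hx ↦ ⟨by linarith [hsum x hx, hg₁0 x hx, hg₂0 x hx],
    by linarith [hsum x hx, hg₁0 x hx, hg₂0 x hx]⟩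

end Comparison

namespace MMPSystem

def phiRHS (μb μs c φ y : ℝ) : ℝ := -(μb * φ * y) - μs * φ * c

noncomputable def yRHS (μb κb βb φ y : ℝ) : ℝ := κb * (φ / (1 + φ)) * (1 - φ) - (μb * φ + βb) * y

section Pointwise

variable {μb μs κb βb c φ y : ℝ}

theorem div_one_add_self_le_one (hφ : 0 ≤ φ) : φ / (1 + φ) ≤ 1 :=
  (div_le_one (by positivity)).2 (by linarith)

theorem phiRHS_le {K : ℝ} (hμb : 0 ≤ μb) (hμs : 0 ≤ μs) (hc : 0 ≤ c) (hφ : 0 < φ)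
    (hφK : φ ≤ K) : phiRHS μb μs c φ y ≤ μb * K * max (-y) 0 := by
  have hmax : μb * φ * -y ≤ μb * K * max (-y) 0 :=
    calc μb * φ * -y ≤ μb * φ * max (-y) 0 := by gcongr; exact le_max_left _ _
      _ ≤ μb * K * max (-y) 0 := by gcongr
  have : 0 ≤ μs * φ * c := by positivity
  unfold phiRHS
  linarith

theorem neg_yRHS_le (hμb : 0 ≤ μb) (hκb : 0 ≤ κb) (hβb : 0 ≤ βb) (hφ : 0 < φ) (hy : y ≤ 0) :
    -yRHS μb κb βb φ y ≤ κb * max (φ - 1) 0 := by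
  have hhill : φ / (1 + φ) * (φ - 1) ≤ max (φ - 1) 0 :=
    calc φ / (1 + φ) * (φ - 1) ≤ φ / (1 + φ) * max (φ - 1) 0 :=
          mul_le_mul_of_nonneg_left (le_max_left _ _) (by positivity)
      _ ≤ max (φ - 1) 0 :=
          mul_le_of_le_one_left (le_max_right _ _) (div_one_add_self_le_one hφ.le)
  have : (μb * φ + βb) * y ≤ 0 := mul_nonpos_of_nonneg_of_nonpos (by positivity) hy
  have : κb * (φ / (1 + φ) * (φ - 1)) ≤ κb * max (φ - 1) 0 := by gcongr
  unfold yRHS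
  linarith

theorem yRHS_add_mul_phiRHS_le {Mb : ℝ} (hμb : 0 ≤ μb) (hμs : 0 ≤ μs) (hMb : 0 ≤ Mb)
    (hκMb : κb ≤ Mb * βb) (hκb : 0 ≤ κb) (hc : 0 ≤ c) (hφ : 0 < φ) (hφ1 : φ ≤ 1) (hy : 0 ≤ y) :
    yRHS μb κb βb φ y + Mb * phiRHS μb μs c φ y ≤ -βb * (y - Mb * (1 - φ)) := by
  have : κb * (φ / (1 + φ)) ≤ κb := mul_le_of_le_one_right hκb (div_one_add_self_le_one hφ.le)
  have : (κb * (φ / (1 + φ)) - Mb * βb) * (1 - φ) ≤ 0 :=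
    mul_nonpos_of_nonpos_of_nonneg (by linarith) (by linarith)
  have : 0 ≤ μb * φ * y := by positivity
  have : 0 ≤ Mb * (μb * φ * y) := by positivity
  have : 0 ≤ Mb * (μs * φ * c) := by positivity
  unfold yRHS phiRHS
  nlinarith

end Pointwise

structure IsSolution (μb μs κb βb : ℝ) (c φ y : ℝ → ℝ) : Prop where
  phi : ∀ t ∈ Ici (0 : ℝ), HasDerivWithinAt φ (phiRHS μb μs (c t) (φ t) (y t)) (Ici 0) t
  y : ∀ t ∈ Ici (0 : ℝ), HasDerivWithinAt y (yRHS μb κb βb (φ t) (y t)) (Ici 0) t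

namespace IsSolution

variable {μb μs κb βb : ℝ} {c φ y : ℝ → ℝ}

theorem continuousOn_phi (h : IsSolution μb μs κb βb c φ y) : ContinuousOn φ (Ici 0) :=
  fun t ht ↦ (h.phi t ht).continuousWithinAt

theorem continuousOn_y (h : IsSolution μb μs κb βb c φ y) : ContinuousOn y (Ici 0) :=
  fun t ht ↦ (h.y t ht).continuousWithinAt

theorem phi_pos (h : IsSolution μb μs κb βb c φ y) (hc : ContinuousOn c (Ici 0))
    (h0 : 0 < φ 0) {T : ℝ} (hT : 0 ≤ T) : 0 < φ T := by
  have hsub : Icc 0 T ⊆ Ici 0 := Icc_subset_Ici_self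
  rw [eq_mul_exp_integral_of_hasDerivWithinAt (g := fun t ↦ -(μb * y t + μs * c t))
    (h.continuousOn_phi.mono hsub)
    ((continuousOn_const.mul (h.continuousOn_y.mono hsub)).add
      (continuousOn_const.mul (hc.mono hsub))).neg
    (fun t ht ↦ ((h.phi t ht.1).mono (Ici_subset_Ici.2 ht.1)).congr_deriv
      (by unfold phiRHS; ring)) T ⟨hT, le_rfl⟩]
  positivity

theorem max_phi_sub_one_le_integral (h : IsSolution μb μs κb βb c φ y) (hμb : 0 ≤ μb)
    (hμs : 0 ≤ μs) (hc : ∀ t ∈ Ici (0 : ℝ), 0 ≤ c t) (hpos : ∀ t ∈ Ici (0 : ℝ), 0 < φ t)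
    (h0 : φ 0 ≤ 1) {K T : ℝ} (hT : 0 ≤ T) (hK : ∀ t ∈ Icc 0 T, φ t ≤ K) :
    max (φ T - 1) 0 ≤ μb * K * ∫ t in 0..T, max (-y t) 0 := by
  have hsub : Icc 0 T ⊆ Ici 0 := Icc_subset_Ici_self
  have hK0 : 0 ≤ K := (hpos 0 self_mem_Ici).le.trans (hK 0 ⟨le_rfl, hT⟩)
  rw [← intervalIntegral.integral_const_mul]
  exact max_zero_le_integral_of_deriv_le (f := fun t ↦ φ t - 1) hT
    ((h.continuousOn_phi.mono hsub).sub continuousOn_const)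
    (fun t ht ↦ ((h.phi t ht.1).mono (Ici_subset_Ici.2 ht.1)).sub_const 1)
    (continuousOn_const.mul ((h.continuousOn_y.mono hsub).neg.sup continuousOn_const))
    (fun t _ ↦ mul_nonneg (mul_nonneg hμb hK0) (le_max_right _ _)) (by linarith)
    (fun t ht _ ↦ phiRHS_le hμb hμs (hc t ht.1.le) (hpos t ht.1.le)
      (hK t (Ioo_subset_Icc_self ht)))

theorem max_neg_y_le_integral (h : IsSolution μb μs κb βb c φ y) (hμb : 0 ≤ μb)
    (hκb : 0 ≤ κb) (hβb : 0 ≤ βb) (hpos : ∀ t ∈ Ici (0 : ℝ), 0 < φ t) (h0 : 0 ≤ y 0) {T : ℝ}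
    (hT : 0 ≤ T) : max (-y T) 0 ≤ κb * ∫ t in 0..T, max (φ t - 1) 0 := by
  have hsub : Icc 0 T ⊆ Ici 0 := Icc_subset_Ici_self
  rw [← intervalIntegral.integral_const_mul]
  exact max_zero_le_integral_of_deriv_le (f := fun t ↦ -y t) hT
    (h.continuousOn_y.mono hsub).neg
    (fun t ht ↦ ((h.y t ht.1).mono (Ici_subset_Ici.2 ht.1)).neg)
    (continuousOn_const.mul (ContinuousOn.sup
      ((h.continuousOn_phi.mono hsub).sub continuousOn_const) continuousOn_const))
    (fun t _ ↦ mul_nonneg hκb (le_max_right _ _)) (by linarith)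
    (fun t ht hy ↦ neg_yRHS_le hμb hκb hβb (hpos t ht.1.le) (by linarith))

theorem phi_le_one_and_y_nonneg (h : IsSolution μb μs κb βb c φ y) (hμb : 0 ≤ μb)
    (hμs : 0 ≤ μs) (hκb : 0 ≤ κb) (hβb : 0 ≤ βb) (hc : ∀ t ∈ Ici (0 : ℝ), 0 ≤ c t)
    (hpos : ∀ t ∈ Ici (0 : ℝ), 0 < φ t) (hφ0 : φ 0 ≤ 1) (hy0 : 0 ≤ y 0) {T : ℝ} (hT : 0 ≤ T) :
    φ T ≤ 1 ∧ 0 ≤ y T := by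
  have hsub : Icc 0 T ⊆ Ici 0 := Icc_subset_Ici_self
  obtain ⟨K, hK⟩ := isCompact_Icc.exists_bound_of_continuousOn (h.continuousOn_phi.mono hsub)
  have hφK : ∀ t ∈ Icc 0 T, φ t ≤ K := fun t ht ↦ (le_abs_self _).trans (hK t ht)
  have hK0 : 0 ≤ K := (hpos 0 self_mem_Ici).le.trans (hφK 0 ⟨le_rfl, hT⟩)
  obtain ⟨hφ1, hy⟩ := eq_zero_of_le_mul_integral_of_le_mul_integral
    (g₁ := fun t ↦ max (φ t - 1) 0) (g₂ := fun t ↦ max (-y t) 0) (mul_nonneg hμb hK0) hκb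
    (ContinuousOn.sup ((h.continuousOn_phi.mono hsub).sub continuousOn_const) continuousOn_const)
    ((h.continuousOn_y.mono hsub).neg.sup continuousOn_const)
    (fun _ _ ↦ le_max_right _ _) (fun _ _ ↦ le_max_right _ _)
    (fun t ht ↦ h.max_phi_sub_one_le_integral hμb hμs hc hpos hφ0 ht.1
      fun s hs ↦ hφK s ⟨hs.1, hs.2.trans ht.2⟩)
    (fun t ht ↦ h.max_neg_y_le_integral hμb hκb hβb hpos hy0 ht.1) T ⟨hT, le_rfl⟩
  exact ⟨by linarith [max_eq_right_iff.1 hφ1], by linarith [max_eq_right_iff.1 hy]⟩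

theorem y_le_mul_one_sub_phi (h : IsSolution μb μs κb βb c φ y) (hμb : 0 ≤ μb) (hμs : 0 ≤ μs)
    (hκb : 0 < κb) (hβb : 0 < βb) {Mb : ℝ} (hMb : κb / βb ≤ Mb) (hc : ∀ t ∈ Ici (0 : ℝ), 0 ≤ c t)
    (hpos : ∀ t ∈ Ici (0 : ℝ), 0 < φ t) (hφ1 : ∀ t ∈ Ici (0 : ℝ), φ t ≤ 1)
    (hy : ∀ t ∈ Ici (0 : ℝ), 0 ≤ y t) (h0 : y 0 ≤ Mb * (1 - φ 0)) {T : ℝ} (hT : 0 ≤ T) :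
    y T ≤ Mb * (1 - φ T) := by
  have hsub : Icc 0 T ⊆ Ici 0 := Icc_subset_Ici_self
  have hMb0 : 0 ≤ Mb := (div_pos hκb hβb).le.trans hMb
  have hκMb : κb ≤ Mb * βb := (div_le_iff₀ hβb).1 hMb
  have hz := max_zero_le_integral_of_deriv_le (f := fun t ↦ y t - Mb * (1 - φ t))
    (w := fun _ ↦ 0) hT
    ((h.continuousOn_y.mono hsub).sub
      (continuousOn_const.mul (continuousOn_const.sub (h.continuousOn_phi.mono hsub))))
    (fun t ht ↦ (((h.y t ht.1).mono (Ici_subset_Ici.2 ht.1)).sub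
      ((((h.phi t ht.1).mono (Ici_subset_Ici.2 ht.1)).const_sub 1).const_mul Mb)).congr_deriv
      (by ring))
    continuousOn_const (fun _ _ ↦ le_rfl) (by linarith)
    (fun t ht hz ↦ (yRHS_add_mul_phiRHS_le hμb hμs hMb0 hκMb hκb.le (hc t ht.1.le)
      (hpos t ht.1.le) (hφ1 t ht.1.le) (hy t ht.1.le)).trans
      (mul_nonpos_of_nonpos_of_nonneg (neg_nonpos.2 hβb.le) hz.le))
  simp only [intervalIntegral.integral_zero, max_le_iff] at hz
  linarith [hz.1]

end IsSolution

end MMPSystem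

/-- refined invariant-region estimate y ≤ M_b(1−φ) for the coupled
system φ' = −μ_b φ y − μ_s φ c, y' = κ_b·(φ/(1+φ))·(1−φ) − (μ_b φ + β_b) y,
with c continuous nonnegative, M_b ≥ κ_b/β_b, 0 < φ(0) ≤ 1 and
0 ≤ y(0) ≤ M_b(1−φ(0)). Then 0 < φ(t) ≤ 1 and 0 ≤ y(t) ≤ M_b(1−φ(t)) for all t ≥ 0. -/
theorem refined_invariant_region
    (μb μs κb βb Mb : ℝ)
    (hμb : 0 ≤ μb) (hμs : 0 ≤ μs) (hκb : 0 < κb) (hβb : 0 < βb)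
    (hMb : κb / βb ≤ Mb)
    (c φ y : ℝ → ℝ)
    (hc_cont : ContinuousOn c (Set.Ici 0))
    (hc_nonneg : ∀ t ∈ Set.Ici (0 : ℝ), 0 ≤ c t)
    (hφ : ∀ t ∈ Set.Ici (0 : ℝ),
      HasDerivWithinAt φ (-(μb * φ t * y t) - μs * φ t * c t) (Set.Ici 0) t)
    (hy : ∀ t ∈ Set.Ici (0 : ℝ),
      HasDerivWithinAt y
        (κb * (φ t / (1 + φ t)) * (1 - φ t) - (μb * φ t + βb) * y t) (Set.Ici 0) t)
    (hφ0_pos : 0 < φ 0) (hφ0_le : φ 0 ≤ 1)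
    (hy0_nonneg : 0 ≤ y 0) (hy0_le : y 0 ≤ Mb * (1 - φ 0)) :
    ∀ t ∈ Set.Ici (0 : ℝ),
      0 < φ t ∧ φ t ≤ 1 ∧ 0 ≤ y t ∧ y t ≤ Mb * (1 - φ t) := by
  have h : MMPSystem.IsSolution μb μs κb βb c φ y := ⟨hφ, hy⟩
  have hpos : ∀ t ∈ Set.Ici (0 : ℝ), 0 < φ t := fun t ht ↦ h.phi_pos hc_cont hφ0_pos ht
  have hbounds : ∀ t ∈ Set.Ici (0 : ℝ), φ t ≤ 1 ∧ 0 ≤ y t := fun t ht ↦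
    h.phi_le_one_and_y_nonneg hμb hμs hκb.le hβb.le hc_nonneg hpos hφ0_le hy0_nonneg ht
  intro t ht
  exact ⟨hpos t ht, (hbounds t ht).1, (hbounds t ht).2,
    h.y_le_mul_one_sub_phi hμb hμs hκb hβb hMb hc_nonneg hpos (fun s hs ↦ (hbounds s hs).1)
      (fun s hs ↦ (hbounds s hs).2) hy0_le ht⟩
end

section
/- Let κ_s, β_s > 0, μ_s ≥ 0, M_{s,0} ≥ 0, and let φ : [0,∞) → ℝ be continuous with 0 ≤ φ(t) ≤ 1 for all t ≥ 0. Suppose c : [0,∞) → ℝ is differentiable with c(t) ≠ −1 for all t and satisfies c'(t) = κ_s·(1/(1+c(t)))·(1−φ(t)) − (μ_s φ(t) + β_s)·c(t) for all t ≥ 0, with 0 ≤ c(0) ≤ M_{s,0}. Then 0 ≤ c(t) ≤ max{M_{s,0}, κ_s/β_s} for all t ≥ 0. -/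
/-! The reaction term is nonnegative where `-1 < c ≤ 0` and nonpositive where `c ≥ κ_s/β_s`,
so neither level `0` nor `M_s` can be crossed: a function whose right derivative is `≤ 0`
wherever it exceeds `M` stays below `M` once it starts there (compare it with the barriers
`M + ε (1 + t)` and let `ε → 0`). The singular level `c = -1` cannot be reached either,
by the intermediate value theorem, which keeps the production term nonnegative below `0`. -/

open Set

theorem lt_of_forall_ne_of_lt_left {f : ℝ → ℝ} {a v : ℝ} (hf : ContinuousOn f (Ici a))
    (hne : ∀ x ∈ Ici a, f x ≠ v) (ha : v < f a) : ∀ x ∈ Ici a, v < f x := by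
  intro x hx
  by_contra! hxv
  obtain ⟨y, hy, hyv⟩ :=
    isPreconnected_Ici.intermediate_value hx self_mem_Ici hf ⟨hxv, ha.le⟩
  exact hne y hy hyv

theorem le_of_deriv_nonpos_of_gt {f f' : ℝ → ℝ} {a M : ℝ}
    (hf : ∀ x ∈ Ici a, HasDerivWithinAt f (f' x) (Ici a) x) (ha : f a ≤ M)
    (hf' : ∀ x ∈ Ici a, M < f x → f' x ≤ 0) : ∀ x ∈ Ici a, f x ≤ M := by
  intro x hx
  have hlen : 0 < 1 + (x - a) := by linarith [mem_Ici.1 hx]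
  refine le_of_forall_pos_le_add fun δ hδ => ?_
  set ε := δ / (1 + (x - a))
  have hε : 0 < ε := div_pos hδ hlen
  have hbarrier := image_le_of_deriv_right_lt_deriv_boundary (a := a) (b := x)
    (B := fun y => M + ε * (1 + (y - a))) (B' := fun _ => ε)
    (fun y hy => (hf y hy.1).continuousWithinAt.mono fun z hz => hz.1)
    (fun y hy => (hf y hy.1).mono (Ici_subset_Ici.2 hy.1))
    (by simpa using ha.trans (le_add_of_nonneg_right hε.le))
    (fun y => by
      simpa using ((((hasDerivAt_id y).sub_const a).const_add 1).const_mul ε).const_add M)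
    (fun y hy hfy => (hf' y hy.1 (by nlinarith [hy.1])).trans_lt hε)
    (right_mem_Icc.2 hx)
  simpa [ε, div_mul_cancel₀ _ hlen.ne'] using hbarrier

noncomputable def solubleMMPReaction (κ β μ p c : ℝ) : ℝ :=
  κ * (1 / (1 + c)) * (1 - p) - (μ * p + β) * c

section Reaction

variable {κ β μ p c : ℝ}

theorem solubleMMPReaction_nonneg (hκ : 0 ≤ κ) (hβ : 0 ≤ β) (hμ : 0 ≤ μ)
    (hp₀ : 0 ≤ p) (hp₁ : p ≤ 1) (hc₁ : -1 < c) (hc₀ : c ≤ 0) :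
    0 ≤ solubleMMPReaction κ β μ p c := by
  have hprod : 0 ≤ κ * (1 / (1 + c)) * (1 - p) :=
    mul_nonneg (mul_nonneg hκ (one_div_nonneg.2 (by linarith))) (by linarith)
  have hdecay : (μ * p + β) * c ≤ 0 := mul_nonpos_of_nonneg_of_nonpos (by positivity) hc₀
  unfold solubleMMPReaction
  linarith

theorem solubleMMPReaction_nonpos (hκ : 0 ≤ κ) (hβ : 0 < β) (hμ : 0 ≤ μ)
    (hp₀ : 0 ≤ p) (hp₁ : p ≤ 1) (hc : κ / β ≤ c) :
    solubleMMPReaction κ β μ p c ≤ 0 := by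
  have hc₀ : 0 ≤ c := (div_nonneg hκ hβ.le).trans hc
  have hprod : κ * (1 / (1 + c)) * (1 - p) ≤ κ := by
    have hfrac : 1 / (1 + c) ≤ 1 := by rw [div_le_one (by linarith)]; linarith
    calc κ * (1 / (1 + c)) * (1 - p) ≤ κ * 1 * 1 := by gcongr; linarith
      _ = κ := by ring
  have hdecay : κ ≤ (μ * p + β) * c :=
    calc κ = β * (κ / β) := by field_simp
      _ ≤ β * c := by gcongr
      _ ≤ (μ * p + β) * c := by nlinarith [mul_nonneg (mul_nonneg hμ hp₀) hc₀]
  unfold solubleMMPReaction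
  linarith

end Reaction

theorem soluble_mmp_invariant_region_general
    (κs βs μs Ms0 : ℝ)
    (hκs : 0 < κs) (hβs : 0 < βs) (hμs : 0 ≤ μs)
    (φ c : ℝ → ℝ)
    (hφ_range : ∀ t ∈ Set.Ici (0 : ℝ), 0 ≤ φ t ∧ φ t ≤ 1)
    (hc_ne : ∀ t : ℝ, c t ≠ -1)
    (hc : ∀ t ∈ Set.Ici (0 : ℝ),
      HasDerivWithinAt c
        (κs * (1 / (1 + c t)) * (1 - φ t) - (μs * φ t + βs) * c t) (Set.Ici 0) t)
    (hc0_nonneg : 0 ≤ c 0) (hc0_le : c 0 ≤ Ms0) :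
    ∀ t ∈ Set.Ici (0 : ℝ), 0 ≤ c t ∧ c t ≤ max Ms0 (κs / βs) := by
  have hc_gt : ∀ t ∈ Ici (0 : ℝ), -1 < c t :=
    lt_of_forall_ne_of_lt_left (fun t ht => (hc t ht).continuousWithinAt)
      (fun t _ => hc_ne t) (by linarith)
  have hlower : ∀ t ∈ Ici (0 : ℝ), -c t ≤ 0 :=
    le_of_deriv_nonpos_of_gt (fun t ht => (hc t ht).neg) (by linarith) fun t ht hct =>
      neg_nonpos.2 <| solubleMMPReaction_nonneg hκs.le hβs.le hμs (hφ_range t ht).1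
        (hφ_range t ht).2 (hc_gt t ht) (by linarith)
  have hupper : ∀ t ∈ Ici (0 : ℝ), c t ≤ max Ms0 (κs / βs) :=
    le_of_deriv_nonpos_of_gt hc (hc0_le.trans (le_max_left _ _)) fun t ht hct =>
      solubleMMPReaction_nonpos hκs.le hβs hμs (hφ_range t ht).1 (hφ_range t ht).2
        ((le_max_right _ _).trans hct.le)
  exact fun t ht => ⟨neg_nonpos.1 (hlower t ht), hupper t ht⟩

/-- invariant-region bound for the soluble-MMP concentration c:
if c' = κ_s·(1/(1+c))·(1−φ) − (μ_s φ + β_s) c with 0 ≤ φ ≤ 1, c ≠ −1 and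
0 ≤ c(0) ≤ M_{s,0}, then 0 ≤ c(t) ≤ max{M_{s,0}, κ_s/β_s} for all t ≥ 0. -/
theorem soluble_mmp_invariant_region
    (κs βs μs Ms0 : ℝ)
    (hκs : 0 < κs) (hβs : 0 < βs) (hμs : 0 ≤ μs) (hMs0 : 0 ≤ Ms0)
    (φ c : ℝ → ℝ)
    (hφ_cont : ContinuousOn φ (Set.Ici 0))
    (hφ_range : ∀ t ∈ Set.Ici (0 : ℝ), 0 ≤ φ t ∧ φ t ≤ 1)
    (hc_ne : ∀ t : ℝ, c t ≠ -1)
    (hc : ∀ t ∈ Set.Ici (0 : ℝ),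
      HasDerivWithinAt c
        (κs * (1 / (1 + c t)) * (1 - φ t) - (μs * φ t + βs) * c t) (Set.Ici 0) t)
    (hc0_nonneg : 0 ≤ c 0) (hc0_le : c 0 ≤ Ms0) :
    ∀ t ∈ Set.Ici (0 : ℝ), 0 ≤ c t ∧ c t ≤ max Ms0 (κs / βs) :=
  soluble_mmp_invariant_region_general κs βs μs Ms0 hκs hβs hμs φ c hφ_range hc_ne hc hc0_nonneg
    hc0_le
end

section
/- Let μ_b, μ_s ≥ 0, κ_b, β_b > 0, M_s ≥ 0, M_{b,0} ≥ 0 and δ₀ ∈ (0,1]. Let c : [0,∞) → ℝ be continuous with 0 ≤ c(t) ≤ M_s for all t ≥ 0, and let φ₀ ∈ [δ₀,1], y₀ ∈ [0, M_{b,0}]. Then there exists exactly one pair of continuously differentiable functions φ, y : [0,∞) → ℝ satisfying φ'(t) = −μ_b φ(t) y(t) − μ_s φ(t) c(t) and y'(t) = κ_b·(φ(t)/(1+φ(t)))·(1−φ(t)) − (μ_b φ(t) + β_b)·y(t) for all t ≥ 0, with φ(0) = φ₀ and y(0) = y₀; moreover this solution satisfies 0 < φ(t) ≤ 1 and 0 ≤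 y(t) ≤ max{M_{b,0}, κ_b/β_b} for all t ≥ 0. -/
open Set


noncomputable def auxClamp (b u : ℝ) : ℝ := max (min u b) 0
lemma auxClamp_nonneg (b u : ℝ) : 0 ≤ auxClamp b u := le_max_right _ _
lemma auxClamp_le {b : ℝ} (hb : 0 ≤ b) (u : ℝ) : auxClamp b u ≤ b :=
  max_le (min_le_right _ _) hb
lemma auxClamp_lip (b u u' : ℝ) : |auxClamp b u - auxClamp b u'| ≤ |u - u'| := by
  refine (abs_max_sub_max_le_abs _ _ _).trans ?_
  simpa using abs_min_sub_min_le_max u b u' b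
lemma auxClamp_abs_le {b : ℝ} (hb : 0 ≤ b) (u : ℝ) : |auxClamp b u| ≤ b := by
  rw [abs_of_nonneg (auxClamp_nonneg b u)]; exact auxClamp_le hb u


lemma auxClamp_eq {b u : ℝ} (h0 : 0 ≤ u) (hb : u ≤ b) : auxClamp b u = u := by
  unfold auxClamp
  rw [min_eq_left hb, max_eq_left h0]

lemma auxClamp_of_nonpos {b u : ℝ} (hb : 0 ≤ b) (h : u ≤ 0) : auxClamp b u = 0 := by
  unfold auxClamp
  rw [min_eq_left (h.trans hb), max_eq_right h]

lemma auxClamp_of_ge {b u : ℝ} (hb : 0 ≤ b) (h : b ≤ u) : auxClamp b u = b := by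
  unfold auxClamp
  rw [min_eq_right h, max_eq_left hb]

lemma aux_abs_mul_sub (a b a' b' A B : ℝ) (hA : |a| ≤ A) (hB : |b'| ≤ B) :
    |a*b - a'*b'| ≤ A*|b - b'| + B*|a - a'| := by
  have h : a*b - a'*b' = a*(b-b') + b'*(a-a') := by ring
  rw [h]
  refine (abs_add_le _ _).trans ?_
  rw [abs_mul, abs_mul]
  gcongr

lemma aux_hill_lip {a b : ℝ} (ha : 0 ≤ a) (hb : 0 ≤ b) :
    |a/(1+a) - b/(1+b)| ≤ |a - b| := by
  have h1 : (0:ℝ) < 1 + a := by linarith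
  have h2 : (0:ℝ) < 1 + b := by linarith
  have h : a/(1+a) - b/(1+b) = (a-b)/((1+a)*(1+b)) := by field_simp; ring
  rw [h, abs_div]
  have hD : (1:ℝ) ≤ |(1+a)*(1+b)| := by
    rw [abs_mul, abs_of_pos h1, abs_of_pos h2]; nlinarith
  exact div_le_self (abs_nonneg _) hD

lemma aux_hill_mem {a : ℝ} (ha : 0 ≤ a) : 0 ≤ a/(1+a) ∧ a/(1+a) ≤ 1 := by
  have h1 : (0:ℝ) < 1 + a := by linarith
  exact ⟨by positivity, by rw [div_le_one h1]; linarith⟩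

/-- The clamped vector field for the invasion ODE subsystem. -/
noncomputable def auxG (μb μs κb βb Y : ℝ) (ct : ℝ → ℝ) : ℝ → ℝ × ℝ → ℝ × ℝ := fun t x =>
  (-(μb * auxClamp 1 x.1 * auxClamp Y x.2) - μs * auxClamp 1 x.1 * ct t,
   κb * (auxClamp 1 x.1 / (1 + auxClamp 1 x.1)) * (1 - auxClamp 1 x.1)
     - (μb * auxClamp 1 x.1 + βb) * auxClamp Y x.2)

set_option maxHeartbeats 1600000 in
lemma auxG_lip {μb μs κb βb Y Ms : ℝ} (ct : ℝ → ℝ)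
    (hμb : 0 ≤ μb) (hμs : 0 ≤ μs) (hκb : 0 ≤ κb) (hβb : 0 ≤ βb) (hY : 0 ≤ Y) (hMs : 0 ≤ Ms)
    (hct : ∀ t, 0 ≤ ct t ∧ ct t ≤ Ms) (t : ℝ) :
    LipschitzWith (Real.toNNReal (μb*(1+Y) + μs*Ms + (2*κb + μb*Y + μb + βb)))
      (auxG μb μs κb βb Y ct t) := by
  have hKg : (0:ℝ) ≤ μb*(1+Y) + μs*Ms + (2*κb + μb*Y + μb + βb) := by positivity
  refine LipschitzWith.of_dist_le_mul ?_
  intro p q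
  rw [Real.coe_toNNReal _ hKg, Prod.dist_eq, Real.dist_eq, Real.dist_eq, Prod.dist_eq,
    Real.dist_eq, Real.dist_eq]
  set Pp := auxClamp 1 p.1 with hPp
  set Pq := auxClamp 1 q.1 with hPq
  set Qp := auxClamp Y p.2 with hQp
  set Qq := auxClamp Y q.2 with hQq
  set d := max |p.1 - q.1| |p.2 - q.2| with hd
  have hd0 : 0 ≤ d := le_trans (abs_nonneg _) (le_max_left _ _)
  have hdu : |Pp - Pq| ≤ d := (auxClamp_lip 1 p.1 q.1).trans (le_max_left _ _)
  have hdv : |Qp - Qq| ≤ d := (auxClamp_lip Y p.2 q.2).trans (le_max_right _ _)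
  have hP0 : 0 ≤ Pp := auxClamp_nonneg _ _
  have hQ0 : 0 ≤ Pq := auxClamp_nonneg _ _
  have hPp1 : |Pp| ≤ 1 := auxClamp_abs_le zero_le_one _
  have hPq1 : |Pq| ≤ 1 := auxClamp_abs_le zero_le_one _
  have hQqY : |Qq| ≤ Y := auxClamp_abs_le hY _
  have hdh : |Pp/(1+Pp) - Pq/(1+Pq)| ≤ |Pp - Pq| := aux_hill_lip hP0 hQ0
  have hhq1 : |Pq/(1+Pq)| ≤ 1 := by
    rw [abs_of_nonneg (aux_hill_mem hQ0).1]; exact (aux_hill_mem hQ0).2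
  have h1Pq : |1 - Pq| ≤ 1 := by
    rw [abs_le]
    constructor
    · have := auxClamp_le zero_le_one q.1; rw [← hPq] at this; linarith
    · linarith
  have e1 : |Pp*Qp - Pq*Qq| ≤ 1*|Qp - Qq| + Y*|Pp - Pq| :=
    aux_abs_mul_sub _ _ _ _ 1 Y hPp1 hQqY
  have hctt := hct t
  refine max_le ?_ ?_
  · -- first component
    have h2 : (auxG μb μs κb βb Y ct t p).1 - (auxG μb μs κb βb Y ct t q).1
        = -(μb*(Pp*Qp - Pq*Qq) + μs * ct t * (Pp - Pq)) := by
      simp only [auxG]; ring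
    rw [h2, abs_neg]
    refine (abs_add_le _ _).trans ?_
    rw [abs_mul, abs_of_nonneg hμb, abs_mul, abs_of_nonneg (mul_nonneg hμs hctt.1)]
    have s1 : μb * |Pp*Qp - Pq*Qq| ≤ μb * (1*d + Y*d) := by
      refine (mul_le_mul_of_nonneg_left e1 hμb).trans (mul_le_mul_of_nonneg_left ?_ hμb)
      have h3 : Y*|Pp-Pq| ≤ Y*d := mul_le_mul_of_nonneg_left hdu hY
      linarith [hdv]
    have s2 : μs * ct t * |Pp - Pq| ≤ μs * Ms * d := by
      have h1 : ct t * |Pp - Pq| ≤ Ms * d := mul_le_mul hctt.2 hdu (abs_nonneg _) hMs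
      calc μs * ct t * |Pp - Pq| = μs * (ct t * |Pp - Pq|) := by ring
        _ ≤ μs * (Ms * d) := mul_le_mul_of_nonneg_left h1 hμs
        _ = μs * Ms * d := by ring
    have final : μb*(1*d + Y*d) + μs*Ms*d
        ≤ (μb*(1+Y) + μs*Ms + (2*κb + μb*Y + μb + βb))*d := by
      nlinarith [mul_nonneg hκb hd0, mul_nonneg (mul_nonneg hμb hY) hd0,
        mul_nonneg hμb hd0, mul_nonneg hβb hd0]
    linarith [s1, s2, final]
  · -- second component
    have h2 : (auxG μb μs κb βb Y ct t p).2 - (auxG μb μs κb βb Y ct t q).2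
        = κb*(Pp/(1+Pp)*(1-Pp) - Pq/(1+Pq)*(1-Pq))
          - (μb*(Pp*Qp - Pq*Qq) + βb*(Qp - Qq)) := by
      simp only [auxG]; ring
    rw [h2]
    have e2 : |Pp/(1+Pp)*(1-Pp) - Pq/(1+Pq)*(1-Pq)|
        ≤ 1*|(1-Pp) - (1-Pq)| + 1*|Pp/(1+Pp) - Pq/(1+Pq)| := by
      refine aux_abs_mul_sub _ _ _ _ 1 1 ?_ h1Pq
      rw [abs_of_nonneg (aux_hill_mem hP0).1]; exact (aux_hill_mem hP0).2
    have e2' : |(1-Pp) - (1-Pq)| = |Pp - Pq| := by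
      rw [show (1-Pp) - (1-Pq) = -(Pp - Pq) by ring, abs_neg]
    rw [e2'] at e2
    refine (abs_sub _ _).trans ?_
    have ha1 : |κb*(Pp/(1+Pp)*(1-Pp) - Pq/(1+Pq)*(1-Pq))| ≤ κb * (2*|Pp - Pq|) := by
      rw [abs_mul, abs_of_nonneg hκb]
      refine mul_le_mul_of_nonneg_left ?_ hκb
      linarith [e2, hdh]
    have ha2 : |μb*(Pp*Qp - Pq*Qq) + βb*(Qp - Qq)|
        ≤ μb*(1*|Qp - Qq| + Y*|Pp - Pq|) + βb*|Qp - Qq| := by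
      refine (abs_add_le _ _).trans ?_
      rw [abs_mul, abs_of_nonneg hμb, abs_mul, abs_of_nonneg hβb]
      gcongr
    have sb1 : κb * (2*|Pp - Pq|) ≤ κb * (2*d) := by
      refine mul_le_mul_of_nonneg_left (by linarith) hκb
    have sb2 : μb*(1*|Qp - Qq| + Y*|Pp - Pq|) ≤ μb*(1*d + Y*d) := by
      refine mul_le_mul_of_nonneg_left ?_ hμb
      have h3 : Y*|Pp-Pq| ≤ Y*d := mul_le_mul_of_nonneg_left hdu hY
      linarith [hdv]
    have sb3 : βb*|Qp - Qq| ≤ βb*d := mul_le_mul_of_nonneg_left hdv hβb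
    have final : κb*(2*d) + (μb*(1*d + Y*d) + βb*d)
        ≤ (μb*(1+Y) + μs*Ms + (2*κb + μb*Y + μb + βb))*d := by
      nlinarith [mul_nonneg hμb hd0, mul_nonneg (mul_nonneg hμb hY) hd0,
        mul_nonneg (mul_nonneg hμs hMs) hd0]
    linarith [ha1, ha2, sb1, sb2, sb3, final]

set_option maxHeartbeats 1600000 in
lemma auxG_bound {μb μs κb βb Y Ms : ℝ} (ct : ℝ → ℝ)
    (hμb : 0 ≤ μb) (hμs : 0 ≤ μs) (hκb : 0 ≤ κb) (hβb : 0 ≤ βb) (hY : 0 ≤ Y) (hMs : 0 ≤ Ms)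
    (hct : ∀ t, 0 ≤ ct t ∧ ct t ≤ Ms) (t : ℝ) (x : ℝ × ℝ) :
    ‖auxG μb μs κb βb Y ct t x‖ ≤ (μb*Y + μs*Ms) + (κb + (μb+βb)*Y) := by
  rw [Prod.norm_def]
  set P := auxClamp 1 x.1 with hP
  set Q := auxClamp Y x.2 with hQ
  have hP0 : 0 ≤ P := auxClamp_nonneg _ _
  have hP1 : P ≤ 1 := auxClamp_le zero_le_one _
  have hQ0 : 0 ≤ Q := auxClamp_nonneg _ _
  have hQY : Q ≤ Y := auxClamp_le hY _
  have hh0 : 0 ≤ P/(1+P) := (aux_hill_mem hP0).1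
  have hh1 : P/(1+P) ≤ 1 := (aux_hill_mem hP0).2
  have hctt := hct t
  refine max_le ?_ ?_
  · rw [Real.norm_eq_abs]
    simp only [auxG]
    rw [abs_le]
    have u1 : μb * P * Q ≤ μb * Y := by
      have : P * Q ≤ 1 * Y := mul_le_mul hP1 hQY hQ0 zero_le_one
      calc μb * P * Q = μb * (P * Q) := by ring
        _ ≤ μb * (1 * Y) := mul_le_mul_of_nonneg_left this hμb
        _ = μb * Y := by ring
    have u2 : μs * P * ct t ≤ μs * Ms := by
      have : P * ct t ≤ 1 * Ms := mul_le_mul hP1 hctt.2 hctt.1 zero_le_one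
      calc μs * P * ct t = μs * (P * ct t) := by ring
        _ ≤ μs * (1 * Ms) := mul_le_mul_of_nonneg_left this hμs
        _ = μs * Ms := by ring
    have u3 : 0 ≤ μb * P * Q := mul_nonneg (mul_nonneg hμb hP0) hQ0
    have u4 : 0 ≤ μs * P * ct t := mul_nonneg (mul_nonneg hμs hP0) hctt.1
    have u5 : (0:ℝ) ≤ κb + (μb+βb)*Y := by positivity
    constructor
    · linarith
    · nlinarith [mul_nonneg hμb hY, mul_nonneg hμs hMs]
  · rw [Real.norm_eq_abs]
    simp only [auxG]
    rw [abs_le]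
    have hb1 : κb * (P/(1+P)) * (1-P) ≤ κb := by
      nlinarith [mul_le_mul hh1 (by linarith : 1 - P ≤ 1) (by linarith : (0:ℝ) ≤ 1-P) zero_le_one]
    have hb0 : 0 ≤ κb * (P/(1+P)) * (1-P) := by
      apply mul_nonneg (mul_nonneg hκb hh0) (by linarith)
    have hc1 : (μb * P + βb) * Q ≤ (μb + βb) * Y := by
      have : μb * P + βb ≤ μb + βb := by nlinarith
      nlinarith [mul_nonneg (by nlinarith : (0:ℝ) ≤ μb * P + βb) hQ0]
    have hc0 : 0 ≤ (μb * P + βb) * Q := by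
      apply mul_nonneg (by nlinarith) hQ0
    constructor
    · nlinarith [mul_nonneg hμb hY, mul_nonneg hμs hMs]
    · nlinarith [mul_nonneg hμb hY, mul_nonneg hμs hMs]

/-- Fencing lemma: if `f 0 ≤ 0` and `f' ≤ M f` whenever `f > 0`, then `f ≤ 0` on `[0, T]`. -/
lemma aux_fence {f f' : ℝ → ℝ} {T M : ℝ} (hM : 0 ≤ M)
    (hf : ContinuousOn f (Icc 0 T))
    (hf' : ∀ t ∈ Ico (0:ℝ) T, HasDerivWithinAt f (f' t) (Ici t) t)
    (h0 : f 0 ≤ 0)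
    (hc : ∀ t ∈ Ico (0:ℝ) T, 0 < f t → f' t ≤ M * f t) :
    ∀ t ∈ Icc (0:ℝ) T, f t ≤ 0 := by
  intro t ht
  have key : ∀ ε > (0:ℝ), f t ≤ ε * Real.exp ((M+1) * t) := by
    intro ε hε
    have hB : ∀ x : ℝ, HasDerivAt (fun s => ε * Real.exp ((M+1)*s))
        ((M+1) * (ε * Real.exp ((M+1)*x))) x := by
      intro x
      have h1 : HasDerivAt (fun s : ℝ => (M+1)*s) (M+1) x := by
        simpa using (hasDerivAt_id x).const_mul (M+1)
      have h2 := (Real.hasDerivAt_exp ((M+1)*x)).comp x h1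
      have h3 := h2.const_mul ε
      rw [show (M+1) * (ε * Real.exp ((M+1)*x)) = ε * (Real.exp ((M+1)*x) * (M+1)) by ring]
      exact h3
    have := image_le_of_deriv_right_lt_deriv_boundary (B := fun s => ε * Real.exp ((M+1)*s))
      (B' := fun s => (M+1) * (ε * Real.exp ((M+1)*s))) hf hf'
      (by simpa using h0.trans (by positivity)) hB ?_ ht
    · exact this
    · intro x hx hfx
      have hposB : 0 < ε * Real.exp ((M+1)*x) := by positivity
      have hfxpos : 0 < f x := hfx ▸ hposB
      have := hc x hx hfxpos
      rw [hfx] at this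
      nlinarith
  by_contra hpos
  push_neg at hpos
  have hE : (0:ℝ) < Real.exp ((M+1)*t) := Real.exp_pos _
  have := key (f t / (2 * Real.exp ((M+1)*t))) (by positivity)
  have h2 : Real.exp ((M+1)*t) / (Real.exp ((M+1)*t) * 2) = 1/2 := by
    field_simp
  rw [div_mul_eq_mul_div, mul_comm (2:ℝ), mul_div_assoc, h2] at this
  linarith



lemma aux_deriv_fst {f : ℝ → ℝ × ℝ} {d : ℝ × ℝ} {s : Set ℝ} {x : ℝ}
    (h : HasDerivWithinAt f d s x) : HasDerivWithinAt (fun t => (f t).1) d.1 s x := by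
  have := (hasFDerivAt_fst (𝕜 := ℝ) (E := ℝ) (F := ℝ) (p := f x)).comp_hasDerivWithinAt x h
  exact this

lemma aux_deriv_snd {f : ℝ → ℝ × ℝ} {d : ℝ × ℝ} {s : Set ℝ} {x : ℝ}
    (h : HasDerivWithinAt f d s x) : HasDerivWithinAt (fun t => (f t).2) d.2 s x := by
  have := (hasFDerivAt_snd (𝕜 := ℝ) (E := ℝ) (F := ℝ) (p := f x)).comp_hasDerivWithinAt x h
  exact this

/-- Global solutions on `[0,∞)` for a bounded, globally Lipschitz ODE. -/
lemma aux_global_sol {v : ℝ → (ℝ × ℝ) → (ℝ × ℝ)} {K : NNReal} {C : ℝ} (x₀ : ℝ × ℝ)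
    (hlip : ∀ t, LipschitzWith K (v t))
    (hcont : ∀ x, Continuous fun t => v t x)
    (hC : 0 ≤ C)
    (hbound : ∀ t x, ‖v t x‖ ≤ C) :
    ∃ sol : ℝ → ℝ × ℝ, sol 0 = x₀ ∧
      ∀ t ∈ Ici (0:ℝ), HasDerivWithinAt sol (v t (sol t)) (Ici 0) t := by
  have pl : ∀ n : ℕ, IsPicardLindelof v (tmin := 0) (tmax := (n:ℝ)) ⟨0, le_rfl, n.cast_nonneg⟩
      x₀ ⟨C * n, by positivity⟩ 0 ⟨C, hC⟩ K := by
    intro n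
    refine ⟨
      fun t _ => (hlip t).lipschitzOnWith,
      fun x _ => (hcont x).continuousOn,
      fun t _ x _ => hbound t x, ?_⟩
    have : max ((n:ℝ) - 0) (0 - 0) = (n:ℝ) := by
      simp [n.cast_nonneg]
    show C * max ((n:ℝ) - 0) (0 - 0) ≤ C * n - 0
    rw [this, sub_zero]
  have := fun n : ℕ => (pl n).exists_eq_forall_mem_Icc_hasDerivWithinAt₀
  choose α hα0 hαd using this
  replace hα0 : ∀ n : ℕ, α n 0 = x₀ := hα0
  -- upgraded derivative facts
  have hmem : ∀ {n : ℕ} {s : ℝ}, s ∈ Ico (0:ℝ) (n:ℝ) → Icc (0:ℝ) (n:ℝ) ∈ nhdsWithin s (Ici s) := by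
    intro n s hs
    refine mem_nhdsWithin.mpr ⟨Iio (n:ℝ), isOpen_Iio, hs.2, ?_⟩
    rintro z ⟨hz1, hz2⟩
    exact ⟨le_trans hs.1 hz2, le_of_lt hz1⟩
  have hd' : ∀ (n : ℕ), ∀ s ∈ Ico (0:ℝ) (n:ℝ),
      HasDerivWithinAt (α n) (v s (α n s)) (Ici s) s := by
    intro n s hs
    exact (hαd n s ⟨hs.1, hs.2.le⟩).mono_of_mem_nhdsWithin (hmem hs)
  have hcont' : ∀ n : ℕ, ContinuousOn (α n) (Icc 0 (n:ℝ)) :=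
    fun n s hs => (hαd n s hs).continuousWithinAt
  have uniq : ∀ (m n : ℕ), (m:ℝ) ≤ (n:ℝ) → ∀ t ∈ Icc (0:ℝ) (m:ℝ), α m t = α n t := by
    intro m n hmn t ht
    refine ODE_solution_unique hlip (hcont' m) (hd' m)
      ((hcont' n).mono (Icc_subset_Icc le_rfl hmn)) ?_ (by rw [hα0 m, hα0 n]) ht
    intro s hs
    exact hd' n s ⟨hs.1, lt_of_lt_of_le hs.2 hmn⟩
  set sol : ℝ → ℝ × ℝ := fun t => α (⌊t⌋₊ + 1) t with hsol
  have agree : ∀ (n : ℕ), ∀ t ∈ Icc (0:ℝ) (n:ℝ), sol t = α n t := by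
    intro n t ht
    have htk : t ≤ ((⌊t⌋₊ + 1 : ℕ) : ℝ) := by
      push_cast
      exact (Nat.lt_floor_add_one t).le
    rcases le_total ((⌊t⌋₊ + 1 : ℕ) : ℝ) ((n : ℕ) : ℝ) with h | h
    · exact uniq _ n h t ⟨ht.1, htk⟩
    · exact (uniq n _ h t ht).symm
  refine ⟨sol, ?_, ?_⟩
  · have := agree 1 0 ⟨le_refl _, by norm_num⟩
    rw [this, hα0 1]
  · intro t ht
    set n : ℕ := ⌊t⌋₊ + 1 with hn
    have htn : t < (n:ℝ) := by
      rw [hn]; push_cast; exact Nat.lt_floor_add_one t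
    have h1 : Icc (0:ℝ) (n:ℝ) ∈ nhdsWithin t (Ici 0) := by
      refine mem_nhdsWithin.mpr ⟨Iio (n:ℝ), isOpen_Iio, htn, ?_⟩
      rintro z ⟨hz1, hz2⟩
      exact ⟨hz2, le_of_lt hz1⟩
    have hdn := (hαd n t ⟨ht, htn.le⟩).mono_of_mem_nhdsWithin h1
    have heq : sol =ᶠ[nhdsWithin t (Ici 0)] α n :=
      Filter.eventuallyEq_of_mem h1 (fun z hz => agree n z hz)
    have hst : sol t = α n t := agree n t ⟨ht, htn.le⟩
    rw [show sol t = α n t from hst]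
    exact hdn.congr_of_eventuallyEq heq hst


lemma aux_ineq1 {μb μs P Q ct : ℝ} (hμb : 0 ≤ μb) (hμs : 0 ≤ μs)
    (hP : 0 ≤ P) (hQ : 0 ≤ Q) (hct : 0 ≤ ct) :
    -(μb * P * Q) - μs * P * ct ≤ 0 := by
  nlinarith [mul_nonneg (mul_nonneg hμb hP) hQ, mul_nonneg (mul_nonneg hμs hP) hct]

lemma aux_ineq2 {κb μb βb P : ℝ} (hκb : 0 ≤ κb) (hP : 0 ≤ P) (hP1 : P ≤ 1) :
    0 ≤ κb * (P / (1 + P)) * (1 - P) - (μb * P + βb) * 0 := by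
  have hh := aux_hill_mem hP
  nlinarith [mul_nonneg (mul_nonneg hκb hh.1) (by linarith : (0:ℝ) ≤ 1 - P)]

lemma aux_ineq3 {κb μb βb Y P : ℝ} (hκb : 0 ≤ κb) (hμb : 0 ≤ μb)
    (hY : 0 ≤ Y) (hκbY : κb ≤ βb * Y) (hP : 0 ≤ P) (hP1 : P ≤ 1) :
    κb * (P / (1 + P)) * (1 - P) - (μb * P + βb) * Y ≤ 0 := by
  have hh := aux_hill_mem hP
  nlinarith [mul_le_mul hh.2 (by linarith : 1 - P ≤ 1) (by linarith : (0:ℝ) ≤ 1 - P) zero_le_one,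
    mul_nonneg (mul_nonneg hμb hP) hY]

lemma aux_ineq4 {μb μs Y Ms φv yv cv E : ℝ} (hμb : 0 ≤ μb) (hμs : 0 ≤ μs)
    (hY : 0 ≤ Y) (hMs : 0 ≤ Ms)
    (hφ : 0 ≤ φv) (hy : yv ≤ Y) (hc : cv ≤ Ms) (hφE : φv ≤ E) :
    -(μb * Y + μs * Ms) * E - (-(μb * φv * yv) - μs * φv * cv) ≤ 0 := by
  have a1 : μb * (φv * yv) ≤ μb * (φv * Y) :=
    mul_le_mul_of_nonneg_left (mul_le_mul_of_nonneg_left hy hφ) hμb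
  have a2 : μs * (φv * cv) ≤ μs * (φv * Ms) :=
    mul_le_mul_of_nonneg_left (mul_le_mul_of_nonneg_left hc hφ) hμs
  have a3 : (μb * Y + μs * Ms) * φv ≤ (μb * Y + μs * Ms) * E :=
    mul_le_mul_of_nonneg_left hφE (add_nonneg (mul_nonneg hμb hY) (mul_nonneg hμs hMs))
  nlinarith [a1, a2, a3]

lemma aux_ineq5 {μb μs R Ms φv yv cv : ℝ} (hμb : 0 ≤ μb) (hμs : 0 ≤ μs) (hMs : 0 ≤ Ms)
    (hφ : φv ≤ 0) (hy : -R ≤ yv) (hc : 0 ≤ cv) :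
    -(-(μb * φv * yv) - μs * φv * cv) ≤ (μb * R + μs * Ms) * (-φv) := by
  have hk : 0 ≤ μb * yv + μs * cv + (μb * R + μs * Ms) := by
    have h2 : μb * (-R) ≤ μb * yv := mul_le_mul_of_nonneg_left hy hμb
    have h3 : 0 ≤ μs * cv := mul_nonneg hμs hc
    have h4 : 0 ≤ μs * Ms := mul_nonneg hμs hMs
    nlinarith
  have hprod : 0 ≤ (-φv) * (μb * yv + μs * cv + (μb * R + μs * Ms)) :=
    mul_nonneg (by linarith) hk
  nlinarith [hprod]

lemma aux_finA {μb μs κb βb Ms R d : ℝ} (hμb : 0 ≤ μb) (hμs : 0 ≤ μs) (hκb : 0 ≤ κb)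
    (hβb : 0 ≤ βb) (hMs : 0 ≤ Ms) (hR : 0 ≤ R) (hd : 0 ≤ d) :
    μb * (R*d + R*d) + μs * Ms * d
      ≤ (μb * (R + R) + μs * Ms + (κb * (1 + (R + R)) + μb * (R + R) + βb)) * d := by
  nlinarith [mul_nonneg (mul_nonneg hκb (by linarith : (0:ℝ) ≤ 1 + (R+R))) hd,
    mul_nonneg (mul_nonneg hμb (by linarith : (0:ℝ) ≤ R + R)) hd,
    mul_nonneg hβb hd]

lemma aux_finB {μb μs κb βb Ms R d : ℝ} (hμb : 0 ≤ μb) (hμs : 0 ≤ μs) (hκb : 0 ≤ κb)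
    (hβb : 0 ≤ βb) (hMs : 0 ≤ Ms) (hR : 0 ≤ R) (hd : 0 ≤ d) :
    κb * ((1 + R) * d) + (μb * (R*d + R*d) + βb * d)
      ≤ (μb * (R + R) + μs * Ms + (κb * (1 + (R + R)) + μb * (R + R) + βb)) * d := by
  nlinarith [mul_nonneg (mul_nonneg hκb hR) hd,
    mul_nonneg (mul_nonneg hμb (by linarith : (0:ℝ) ≤ R + R)) hd,
    mul_nonneg (mul_nonneg hμs hMs) hd]

/-- The pair (φ, y) solves the ODE subsystem for the ECM volume fraction and the
bound-MMP density driven by a prescribed soluble-MMP concentration c, on [0,∞),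
with initial data (φ₀, y₀). -/
def IsInvasionODESol (μb μs κb βb φ₀ y₀ : ℝ) (c φ y : ℝ → ℝ) : Prop :=
  (∀ t ∈ Set.Ici (0 : ℝ),
    HasDerivWithinAt φ (-(μb * φ t * y t) - μs * φ t * c t) (Set.Ici 0) t) ∧
  (∀ t ∈ Set.Ici (0 : ℝ),
    HasDerivWithinAt y
      (κb * (φ t / (1 + φ t)) * (1 - φ t) - (μb * φ t + βb) * y t) (Set.Ici 0) t) ∧
  φ 0 = φ₀ ∧ y 0 = y₀

set_option maxHeartbeats 4000000 in
/-- global existence, uniqueness (on [0,∞)) and invariant bounds for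
the ODE subsystem φ' = −μ_b φ y − μ_s φ c,
y' = κ_b·(φ/(1+φ))·(1−φ) − (μ_b φ + β_b) y, driven by a continuous c with values
in [0, M_s], with initial data φ₀ ∈ [δ₀,1], y₀ ∈ [0, M_{b,0}]. The solution
satisfies 0 < φ ≤ 1 and 0 ≤ y ≤ max{M_{b,0}, κ_b/β_b}. -/
theorem ode_subsystem_wellposed
    (μb μs κb βb Ms Mb0 δ₀ φ₀ y₀ : ℝ)
    (hμb : 0 ≤ μb) (hμs : 0 ≤ μs) (hκb : 0 < κb) (hβb : 0 < βb)
    (hMs : 0 ≤ Ms) (hMb0 : 0 ≤ Mb0) (hδ₀ : 0 < δ₀) (hδ₀' : δ₀ ≤ 1)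
    (c : ℝ → ℝ)
    (hc_cont : ContinuousOn c (Set.Ici 0))
    (hc : ∀ t ∈ Set.Ici (0 : ℝ), 0 ≤ c t ∧ c t ≤ Ms)
    (hφ₀ : φ₀ ∈ Set.Icc δ₀ 1) (hy₀ : y₀ ∈ Set.Icc (0 : ℝ) Mb0) :
    (∃ φ y : ℝ → ℝ,
      IsInvasionODESol μb μs κb βb φ₀ y₀ c φ y ∧
      ∀ t ∈ Set.Ici (0 : ℝ),
        0 < φ t ∧ φ t ≤ 1 ∧ 0 ≤ y t ∧ y t ≤ max Mb0 (κb / βb)) ∧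
    (∀ φ₁ y₁ φ₂ y₂ : ℝ → ℝ,
      IsInvasionODESol μb μs κb βb φ₀ y₀ c φ₁ y₁ →
      IsInvasionODESol μb μs κb βb φ₀ y₀ c φ₂ y₂ →
      ∀ t ∈ Set.Ici (0 : ℝ), φ₁ t = φ₂ t ∧ y₁ t = y₂ t) := by

  have hφ₀pos : 0 < φ₀ := lt_of_lt_of_le hδ₀ hφ₀.1
  set Y : ℝ := max Mb0 (κb / βb) with hYdef
  have hMb0Y : Mb0 ≤ Y := by rw [hYdef]; exact le_max_left _ _
  have hY0 : 0 ≤ Y := le_trans hMb0 hMb0Y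
  have hκbY : κb ≤ βb * Y := by
    have h : κb / βb ≤ Y := by rw [hYdef]; exact le_max_right _ _
    calc κb = βb * (κb / βb) := by field_simp
      _ ≤ βb * Y := mul_le_mul_of_nonneg_left h hβb.le
  set ct : ℝ → ℝ := fun t => c (max t 0) with hctdef
  have hct_cont : Continuous ct :=
    hc_cont.comp_continuous (continuous_id.max continuous_const)
      (fun x => mem_Ici.mpr (le_max_right _ _))
  have hct : ∀ t, 0 ≤ ct t ∧ ct t ≤ Ms := fun t => hc _ (mem_Ici.mpr (le_max_right _ _))
  have hct_eq : ∀ t : ℝ, 0 ≤ t → ct t = c t := by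
    intro t ht
    simp only [hctdef, max_eq_left ht]
  -- the clamped vector field
  set G : ℝ → ℝ × ℝ → ℝ × ℝ := auxG μb μs κb βb Y ct with hGdef
  have hlip := auxG_lip ct hμb hμs hκb.le hβb.le hY0 hMs hct
  have hbnd := auxG_bound ct hμb hμs hκb.le hβb.le hY0 hMs hct
  have hcontG : ∀ x, Continuous fun t => G t x := by
    intro x
    simp only [hGdef, auxG]
    exact (continuous_const.sub (continuous_const.mul hct_cont)).prodMk continuous_const
  obtain ⟨sol, hsol0, hsold⟩ :=
    aux_global_sol (v := G) (x₀ := (φ₀, y₀)) hlip hcontG (by positivity) hbnd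
  set φ : ℝ → ℝ := fun t => (sol t).1 with hφdef
  set y : ℝ → ℝ := fun t => (sol t).2 with hydef
  have hdφ : ∀ t ∈ Ici (0:ℝ), HasDerivWithinAt φ ((G t (sol t)).1) (Ici 0) t :=
    fun t ht => aux_deriv_fst (hsold t ht)
  have hdy : ∀ t ∈ Ici (0:ℝ), HasDerivWithinAt y ((G t (sol t)).2) (Ici 0) t :=
    fun t ht => aux_deriv_snd (hsold t ht)
  have hφ0 : φ 0 = φ₀ := by simp only [hφdef]; rw [hsol0]
  have hy0 : y 0 = y₀ := by simp only [hydef]; rw [hsol0]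
  have hcφ : ContinuousOn φ (Ici 0) := fun t ht => (hdφ t ht).continuousWithinAt
  have hcy : ContinuousOn y (Ici 0) := fun t ht => (hdy t ht).continuousWithinAt
  have hG1 : ∀ t, (G t (sol t)).1
      = -(μb * auxClamp 1 (φ t) * auxClamp Y (y t)) - μs * auxClamp 1 (φ t) * ct t :=
    fun t => rfl
  have hG2 : ∀ t, (G t (sol t)).2
      = κb * (auxClamp 1 (φ t) / (1 + auxClamp 1 (φ t))) * (1 - auxClamp 1 (φ t))
        - (μb * auxClamp 1 (φ t) + βb) * auxClamp Y (y t) :=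
    fun t => rfl
  -- invariant region: φ ≤ 1
  have hφle1 : ∀ t ∈ Ici (0:ℝ), φ t ≤ 1 := by
    intro T hT
    have key := aux_fence (f := fun t => φ t - 1) (f' := fun t => (G t (sol t)).1)
      (T := T) (M := 0) le_rfl
      (((hcφ.mono Icc_subset_Ici_self).sub continuousOn_const))
      (fun s hs => ((hdφ s hs.1).mono (Ici_subset_Ici.mpr hs.1)).sub_const 1)
      (by show φ 0 - 1 ≤ 0; rw [hφ0]; linarith only [hφ₀.2])
      ?_ T ⟨hT, le_rfl⟩
    · have key' : φ T - 1 ≤ 0 := key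
      linarith only [key']
    · intro s hs _
      show (G s (sol s)).1 ≤ 0 * (φ s - 1)
      rw [zero_mul, hG1 s]
      exact aux_ineq1 hμb hμs (auxClamp_nonneg _ _) (auxClamp_nonneg _ _) (hct s).1
  -- invariant region: φ ≥ 0
  have hφge0 : ∀ t ∈ Ici (0:ℝ), 0 ≤ φ t := by
    intro T hT
    have key := aux_fence (f := fun t => -φ t) (f' := fun t => -((G t (sol t)).1))
      (T := T) (M := 0) le_rfl
      ((hcφ.mono Icc_subset_Ici_self).neg)
      (fun s hs => ((hdφ s hs.1).mono (Ici_subset_Ici.mpr hs.1)).neg)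
      (by show -φ 0 ≤ 0; rw [hφ0]; linarith only [hφ₀pos])
      ?_ T ⟨hT, le_rfl⟩
    · have key' : -φ T ≤ 0 := key
      linarith only [key']
    · intro s hs hpos
      have hpos' : 0 < -φ s := hpos
      have hφneg : φ s ≤ 0 := by linarith only [hpos']
      have hcl : auxClamp 1 (φ s) = 0 := auxClamp_of_nonpos zero_le_one hφneg
      show -((G s (sol s)).1) ≤ 0 * (-φ s)
      have hz : (G s (sol s)).1 = 0 := by rw [hG1 s, hcl]; ring
      rw [hz, zero_mul, neg_zero]
  -- invariant region: y ≥ 0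
  have hyge0 : ∀ t ∈ Ici (0:ℝ), 0 ≤ y t := by
    intro T hT
    have key := aux_fence (f := fun t => -y t) (f' := fun t => -((G t (sol t)).2))
      (T := T) (M := 0) le_rfl
      ((hcy.mono Icc_subset_Ici_self).neg)
      (fun s hs => ((hdy s hs.1).mono (Ici_subset_Ici.mpr hs.1)).neg)
      (by show -y 0 ≤ 0; rw [hy0]; linarith only [hy₀.1])
      ?_ T ⟨hT, le_rfl⟩
    · have key' : -y T ≤ 0 := key
      linarith only [key']
    · intro s hs hpos
      have hpos' : 0 < -y s := hpos
      have hyneg : y s ≤ 0 := by linarith only [hpos']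
      have hcl : auxClamp Y (y s) = 0 := auxClamp_of_nonpos hY0 hyneg
      show -((G s (sol s)).2) ≤ 0 * (-y s)
      rw [zero_mul, neg_nonpos, hG2 s, hcl]
      exact aux_ineq2 hκb.le (auxClamp_nonneg _ _) (auxClamp_le zero_le_one _)
  -- invariant region: y ≤ Y
  have hyleY : ∀ t ∈ Ici (0:ℝ), y t ≤ Y := by
    intro T hT
    have key := aux_fence (f := fun t => y t - Y) (f' := fun t => (G t (sol t)).2)
      (T := T) (M := 0) le_rfl
      ((hcy.mono Icc_subset_Ici_self).sub continuousOn_const)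
      (fun s hs => ((hdy s hs.1).mono (Ici_subset_Ici.mpr hs.1)).sub_const Y)
      (by show y 0 - Y ≤ 0; rw [hy0]; linarith only [hy₀.2, hMb0Y])
      ?_ T ⟨hT, le_rfl⟩
    · have key' : y T - Y ≤ 0 := key
      linarith only [key']
    · intro s hs hpos
      have hpos' : 0 < y s - Y := hpos
      have hyY : Y ≤ y s := by linarith only [hpos']
      have hcl : auxClamp Y (y s) = Y := auxClamp_of_ge hY0 hyY
      show (G s (sol s)).2 ≤ 0 * (y s - Y)
      rw [zero_mul, hG2 s, hcl]
      exact aux_ineq3 hκb.le hμb hY0 hκbY (auxClamp_nonneg _ _) (auxClamp_le zero_le_one _)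
  -- clamp identities on the invariant region
  have hPid : ∀ t ∈ Ici (0:ℝ), auxClamp 1 (φ t) = φ t :=
    fun t ht => auxClamp_eq (hφge0 t ht) (hφle1 t ht)
  have hQid : ∀ t ∈ Ici (0:ℝ), auxClamp Y (y t) = y t :=
    fun t ht => auxClamp_eq (hyge0 t ht) (hyleY t ht)
  -- (φ, y) solves the original system
  have heq1 : ∀ t ∈ Ici (0:ℝ),
      HasDerivWithinAt φ (-(μb * φ t * y t) - μs * φ t * c t) (Ici 0) t := by
    intro t ht
    have h := hdφ t ht
    rw [hG1 t, hPid t ht, hQid t ht, hct_eq t ht] at h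
    exact h
  have heq2 : ∀ t ∈ Ici (0:ℝ),
      HasDerivWithinAt y
        (κb * (φ t / (1 + φ t)) * (1 - φ t) - (μb * φ t + βb) * y t) (Ici 0) t := by
    intro t ht
    have h := hdy t ht
    rw [hG2 t, hPid t ht, hQid t ht] at h
    exact h
  -- strict positivity of φ
  have hφpos : ∀ t ∈ Ici (0:ℝ), φ₀ * Real.exp (-(μb * Y + μs * Ms) * t) ≤ φ t := by
    intro T hT
    have hexp : ∀ s : ℝ, HasDerivAt (fun r => φ₀ * Real.exp (-(μb * Y + μs * Ms) * r))
        (-(μb * Y + μs * Ms) * (φ₀ * Real.exp (-(μb * Y + μs * Ms) * s))) s := by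
      intro s
      have h1 : HasDerivAt (fun r : ℝ => -(μb * Y + μs * Ms) * r) (-(μb * Y + μs * Ms)) s := by
        simpa using (hasDerivAt_id s).const_mul (-(μb * Y + μs * Ms))
      have h2 := (Real.hasDerivAt_exp (-(μb * Y + μs * Ms) * s)).comp s h1
      have h3 := h2.const_mul φ₀
      rw [show -(μb * Y + μs * Ms) * (φ₀ * Real.exp (-(μb * Y + μs * Ms) * s))
        = φ₀ * (Real.exp (-(μb * Y + μs * Ms) * s) * -(μb * Y + μs * Ms)) by ring]
      exact h3
    have key := aux_fence
      (f := fun t => φ₀ * Real.exp (-(μb * Y + μs * Ms) * t) - φ t)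
      (f' := fun t => -(μb * Y + μs * Ms) * (φ₀ * Real.exp (-(μb * Y + μs * Ms) * t))
        - (G t (sol t)).1)
      (T := T) (M := 0) le_rfl
      ((continuous_const.mul (Real.continuous_exp.comp (continuous_const.mul continuous_id))).continuousOn.sub (hcφ.mono Icc_subset_Ici_self))
      (fun s hs => ((hexp s).hasDerivWithinAt).sub
        ((hdφ s hs.1).mono (Ici_subset_Ici.mpr hs.1)))
      (by show φ₀ * Real.exp (-(μb * Y + μs * Ms) * 0) - φ 0 ≤ 0; rw [hφ0]; simp)
      ?_ T ⟨hT, le_rfl⟩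
    · have key' : φ₀ * Real.exp (-(μb * Y + μs * Ms) * T) - φ T ≤ 0 := key
      linarith only [key']
    · intro s hs hcontact
      have hcontact' : 0 < φ₀ * Real.exp (-(μb * Y + μs * Ms) * s) - φ s := hcontact
      show -(μb * Y + μs * Ms) * (φ₀ * Real.exp (-(μb * Y + μs * Ms) * s)) - (G s (sol s)).1
        ≤ 0 * (φ₀ * Real.exp (-(μb * Y + μs * Ms) * s) - φ s)
      rw [zero_mul, hG1 s, hPid s hs.1, hQid s hs.1]
      exact aux_ineq4 hμb hμs hY0 hMs (hφge0 s hs.1) (hyleY s hs.1) (hct s).2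
        (by linarith only [hcontact'])
  -- assemble existence
  constructor
  · refine ⟨φ, y, ⟨heq1, heq2, hφ0, hy0⟩, ?_⟩
    intro t ht
    have hp : 0 < φ₀ * Real.exp (-(μb * Y + μs * Ms) * t) :=
      mul_pos hφ₀pos (Real.exp_pos _)
    exact ⟨lt_of_lt_of_le hp (hφpos t ht), hφle1 t ht, hyge0 t ht, hyleY t ht⟩
  -- uniqueness
  · rintro φ₁ y₁ φ₂ y₂ ⟨h1d, h1yd, h10, h1y0⟩ ⟨h2d, h2yd, h20, h2y0⟩ t ht
    have hc1φ : ContinuousOn φ₁ (Icc 0 t) :=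
      fun s hs => ((h1d s hs.1).continuousWithinAt).mono Icc_subset_Ici_self
    have hc1y : ContinuousOn y₁ (Icc 0 t) :=
      fun s hs => ((h1yd s hs.1).continuousWithinAt).mono Icc_subset_Ici_self
    have hc2φ : ContinuousOn φ₂ (Icc 0 t) :=
      fun s hs => ((h2d s hs.1).continuousWithinAt).mono Icc_subset_Ici_self
    have hc2y : ContinuousOn y₂ (Icc 0 t) :=
      fun s hs => ((h2yd s hs.1).continuousWithinAt).mono Icc_subset_Ici_self
    obtain ⟨C1, hC1⟩ := isCompact_Icc.exists_bound_of_continuousOn hc1φ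
    obtain ⟨C2, hC2⟩ := isCompact_Icc.exists_bound_of_continuousOn hc1y
    obtain ⟨C3, hC3⟩ := isCompact_Icc.exists_bound_of_continuousOn hc2φ
    obtain ⟨C4, hC4⟩ := isCompact_Icc.exists_bound_of_continuousOn hc2y
    set R : ℝ := max 1 (max (max C1 C2) (max C3 C4)) with hRdef
    have hR1 : (1:ℝ) ≤ R := by rw [hRdef]; exact le_max_left _ _
    have hR0 : (0:ℝ) < R := lt_of_lt_of_le one_pos hR1
    have hball : ∀ s ∈ Icc (0:ℝ) t, |φ₁ s| ≤ R ∧ |y₁ s| ≤ R ∧ |φ₂ s| ≤ R ∧ |y₂ s| ≤ R := by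
      intro s hs
      rw [hRdef]
      have h1 := hC1 s hs; have h2 := hC2 s hs
      have h3 := hC3 s hs; have h4 := hC4 s hs
      rw [Real.norm_eq_abs] at h1 h2 h3 h4
      exact ⟨h1.trans ((le_max_left C1 C2).trans ((le_max_left _ _).trans (le_max_right _ _))),
             h2.trans ((le_max_right C1 C2).trans ((le_max_left _ _).trans (le_max_right _ _))),
             h3.trans ((le_max_left C3 C4).trans ((le_max_right _ _).trans (le_max_right _ _))),
             h4.trans ((le_max_right C3 C4).trans ((le_max_right _ _).trans (le_max_right _ _)))⟩
    have hb1φ : ∀ s ∈ Icc (0:ℝ) t, |φ₁ s| ≤ R := fun s hs => (hball s hs).1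
    have hb1y : ∀ s ∈ Icc (0:ℝ) t, |y₁ s| ≤ R := fun s hs => (hball s hs).2.1
    have hb2φ : ∀ s ∈ Icc (0:ℝ) t, |φ₂ s| ≤ R := fun s hs => (hball s hs).2.2.1
    have hb2y : ∀ s ∈ Icc (0:ℝ) t, |y₂ s| ≤ R := fun s hs => (hball s hs).2.2.2
    -- lower bound for any solution with these bounds
    have solpos : ∀ φa ya : ℝ → ℝ,
        (∀ s ∈ Ici (0:ℝ),
          HasDerivWithinAt φa (-(μb * φa s * ya s) - μs * φa s * c s) (Ici 0) s) →
        φa 0 = φ₀ →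
        (∀ s ∈ Icc (0:ℝ) t, |ya s| ≤ R) →
        ∀ s ∈ Icc (0:ℝ) t, φ₀ * Real.exp (-(μb * R + μs * Ms) * s) ≤ φa s := by
      intro φa ya had ha0 hyaR
      have hcφa : ContinuousOn φa (Icc 0 t) :=
        fun s hs => ((had s hs.1).continuousWithinAt).mono Icc_subset_Ici_self
      have step1 : ∀ s ∈ Icc (0:ℝ) t, 0 ≤ φa s := by
        have key := aux_fence (f := fun s => -φa s)
          (f' := fun s => -(-(μb * φa s * ya s) - μs * φa s * c s))
          (T := t) (M := μb * R + μs * Ms)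
          (add_nonneg (mul_nonneg hμb hR0.le) (mul_nonneg hμs hMs))
          (hcφa.neg)
          (fun s hs => ((had s hs.1).mono (Ici_subset_Ici.mpr hs.1)).neg)
          (by show -φa 0 ≤ 0; rw [ha0]; linarith only [hφ₀pos])
          ?_
        · intro s hs
          have key' : -φa s ≤ 0 := key s hs
          linarith only [key']
        · intro s hs hpos
          have hpos' : 0 < -φa s := hpos
          show -(-(μb * φa s * ya s) - μs * φa s * c s) ≤ (μb * R + μs * Ms) * (-φa s)
          exact aux_ineq5 hμb hμs hMs (by linarith only [hpos'])
            (neg_le_of_abs_le (hyaR s ⟨hs.1, hs.2.le⟩)) (hc s hs.1).1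
      have hexpM : ∀ s : ℝ, HasDerivAt (fun r => φ₀ * Real.exp (-(μb * R + μs * Ms) * r))
          (-(μb * R + μs * Ms) * (φ₀ * Real.exp (-(μb * R + μs * Ms) * s))) s := by
        intro s
        have h1 : HasDerivAt (fun r : ℝ => -(μb * R + μs * Ms) * r)
            (-(μb * R + μs * Ms)) s := by
          simpa using (hasDerivAt_id s).const_mul (-(μb * R + μs * Ms))
        have h2 := (Real.hasDerivAt_exp (-(μb * R + μs * Ms) * s)).comp s h1
        have h3 := h2.const_mul φ₀
        rw [show -(μb * R + μs * Ms) * (φ₀ * Real.exp (-(μb * R + μs * Ms) * s))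
          = φ₀ * (Real.exp (-(μb * R + μs * Ms) * s) * -(μb * R + μs * Ms)) by ring]
        exact h3
      have key := aux_fence
        (f := fun s => φ₀ * Real.exp (-(μb * R + μs * Ms) * s) - φa s)
        (f' := fun s => -(μb * R + μs * Ms) * (φ₀ * Real.exp (-(μb * R + μs * Ms) * s))
          - (-(μb * φa s * ya s) - μs * φa s * c s))
        (T := t) (M := 0) le_rfl
        (((continuous_const.mul (Real.continuous_exp.comp
          (continuous_const.mul continuous_id))).continuousOn).sub hcφa)
        (fun s hs => ((hexpM s).hasDerivWithinAt).sub
          ((had s hs.1).mono (Ici_subset_Ici.mpr hs.1)))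
        (by show φ₀ * Real.exp (-(μb * R + μs * Ms) * 0) - φa 0 ≤ 0; rw [ha0]; simp)
        ?_
      · intro s hs
        have key' : φ₀ * Real.exp (-(μb * R + μs * Ms) * s) - φa s ≤ 0 := key s hs
        linarith only [key']
      · intro s hs hcontact
        have hcontact' : 0 < φ₀ * Real.exp (-(μb * R + μs * Ms) * s) - φa s := hcontact
        show -(μb * R + μs * Ms) * (φ₀ * Real.exp (-(μb * R + μs * Ms) * s))
            - (-(μb * φa s * ya s) - μs * φa s * c s)
          ≤ 0 * (φ₀ * Real.exp (-(μb * R + μs * Ms) * s) - φa s)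
        rw [zero_mul]
        exact aux_ineq4 hμb hμs hR0.le hMs (step1 s ⟨hs.1, hs.2.le⟩)
          (le_of_abs_le (hyaR s ⟨hs.1, hs.2.le⟩)) (hc s hs.1).2
          (by linarith only [hcontact'])
    set m : ℝ := φ₀ * Real.exp (-(μb * R + μs * Ms) * t) with hmdef
    have hM0 : 0 ≤ μb * R + μs * Ms := add_nonneg (mul_nonneg hμb hR0.le) (mul_nonneg hμs hMs)
    have hm0 : 0 < m := by rw [hmdef]; exact mul_pos hφ₀pos (Real.exp_pos _)
    have hmono : ∀ s ∈ Icc (0:ℝ) t, m ≤ φ₀ * Real.exp (-(μb * R + μs * Ms) * s) := by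
      intro s hs
      rw [hmdef]
      refine mul_le_mul_of_nonneg_left (Real.exp_le_exp.mpr ?_) hφ₀pos.le
      nlinarith [hs.2, hM0]
    have hm1 : ∀ s ∈ Icc (0:ℝ) t, m ≤ φ₁ s :=
      fun s hs => le_trans (hmono s hs) (solpos φ₁ y₁ h1d h10 hb1y s hs)
    have hm2 : ∀ s ∈ Icc (0:ℝ) t, m ≤ φ₂ s :=
      fun s hs => le_trans (hmono s hs) (solpos φ₂ y₂ h2d h20 hb2y s hs)
    -- the true vector field, Lipschitz on the region D
    set v : ℝ → ℝ × ℝ → ℝ × ℝ := fun s x =>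
      (-(μb * x.1 * x.2) - μs * x.1 * ct s,
       κb * (x.1 / (1 + x.1)) * (1 - x.1) - (μb * x.1 + βb) * x.2) with hvdef
    set D : Set (ℝ × ℝ) := {x | x.1 ∈ Icc m R ∧ x.2 ∈ Icc (-R) R} with hDdef
    set Kr : ℝ := μb * (R + R) + μs * Ms + (κb * (1 + (R + R)) + μb * (R + R) + βb)
      with hKrdef
    have hKr0 : 0 ≤ Kr := by
      rw [hKrdef]
      have a1 : 0 ≤ μb * (R + R) := mul_nonneg hμb (by linarith only [hR1])
      have a2 : 0 ≤ μs * Ms := mul_nonneg hμs hMs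
      have a3 : 0 ≤ κb * (1 + (R + R)) := mul_nonneg hκb.le (by linarith only [hR1])
      linarith only [a1, a2, a3, hβb.le]
    have hlipD : ∀ s : ℝ, LipschitzOnWith Kr.toNNReal (v s) D := by
      intro s
      rw [lipschitzOnWith_iff_dist_le_mul]
      intro p hp q hq
      rw [Real.coe_toNNReal _ hKr0, Prod.dist_eq, Real.dist_eq, Real.dist_eq, Prod.dist_eq,
        Real.dist_eq, Real.dist_eq]
      obtain ⟨⟨hp1m, hp1R⟩, hp2l, hp2r⟩ := hp
      obtain ⟨⟨hq1m, hq1R⟩, hq2l, hq2r⟩ := hq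
      have hp10 : 0 ≤ p.1 := le_trans hm0.le hp1m
      have hq10 : 0 ≤ q.1 := le_trans hm0.le hq1m
      set d := max |p.1 - q.1| |p.2 - q.2| with hd
      have hd0 : 0 ≤ d := le_trans (abs_nonneg _) (le_max_left _ _)
      have hdu : |p.1 - q.1| ≤ d := le_max_left _ _
      have hdv : |p.2 - q.2| ≤ d := le_max_right _ _
      have hp1abs : |p.1| ≤ R := abs_le.mpr ⟨by linarith only [hp10, hR0], hp1R⟩
      have hq2abs : |q.2| ≤ R := abs_le.mpr ⟨hq2l, hq2r⟩
      have hdh : |p.1/(1+p.1) - q.1/(1+q.1)| ≤ |p.1 - q.1| := aux_hill_lip hp10 hq10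
      have hhp1 : |p.1/(1+p.1)| ≤ 1 := by
        rw [abs_of_nonneg (aux_hill_mem hp10).1]; exact (aux_hill_mem hp10).2
      have h1q1 : |1 - q.1| ≤ R := by
        rw [abs_le]
        constructor
        · linarith only [hq1R]
        · linarith only [hq10, hR1]
      have e1 : |p.1*p.2 - q.1*q.2| ≤ R*|p.2 - q.2| + R*|p.1 - q.1| :=
        aux_abs_mul_sub _ _ _ _ R R hp1abs hq2abs
      refine max_le ?_ ?_
      · have h2 : (v s p).1 - (v s q).1
            = -(μb*(p.1*p.2 - q.1*q.2) + μs * ct s * (p.1 - q.1)) := by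
          simp only [hvdef]; ring
        rw [h2, abs_neg]
        refine (abs_add_le _ _).trans ?_
        rw [abs_mul, abs_of_nonneg hμb, abs_mul, abs_of_nonneg (mul_nonneg hμs (hct s).1)]
        have s1 : μb * |p.1*p.2 - q.1*q.2| ≤ μb * (R*d + R*d) := by
          refine (mul_le_mul_of_nonneg_left e1 hμb).trans (mul_le_mul_of_nonneg_left ?_ hμb)
          have h3 : R*|p.1-q.1| ≤ R*d := mul_le_mul_of_nonneg_left hdu hR0.le
          have h4 : R*|p.2-q.2| ≤ R*d := mul_le_mul_of_nonneg_left hdv hR0.le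
          linarith only [h3, h4]
        have s2 : μs * ct s * |p.1 - q.1| ≤ μs * Ms * d := by
          have h1 : ct s * |p.1 - q.1| ≤ Ms * d :=
            mul_le_mul (hct s).2 hdu (abs_nonneg _) hMs
          calc μs * ct s * |p.1 - q.1| = μs * (ct s * |p.1 - q.1|) := by ring
            _ ≤ μs * (Ms * d) := mul_le_mul_of_nonneg_left h1 hμs
            _ = μs * Ms * d := by ring
        have final : μb * (R*d + R*d) + μs * Ms * d ≤ Kr * d := by
          rw [hKrdef]
          exact aux_finA hμb hμs hκb.le hβb.le hMs hR0.le hd0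
        exact le_trans (add_le_add s1 s2) final
      · have h2 : (v s p).2 - (v s q).2
            = κb*(p.1/(1+p.1)*(1-p.1) - q.1/(1+q.1)*(1-q.1))
              - (μb*(p.1*p.2 - q.1*q.2) + βb*(p.2 - q.2)) := by
          simp only [hvdef]; ring
        rw [h2]
        have e2 : |p.1/(1+p.1)*(1-p.1) - q.1/(1+q.1)*(1-q.1)|
            ≤ 1*|(1-p.1) - (1-q.1)| + R*|p.1/(1+p.1) - q.1/(1+q.1)| :=
          aux_abs_mul_sub _ _ _ _ 1 R hhp1 h1q1
        have e2' : |(1-p.1) - (1-q.1)| = |p.1 - q.1| := by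
          rw [show (1-p.1) - (1-q.1) = -(p.1 - q.1) by ring, abs_neg]
        rw [e2'] at e2
        refine (abs_sub _ _).trans ?_
        have ha1 : |κb*(p.1/(1+p.1)*(1-p.1) - q.1/(1+q.1)*(1-q.1))|
            ≤ κb * ((1 + R) * d) := by
          rw [abs_mul, abs_of_nonneg hκb.le]
          refine mul_le_mul_of_nonneg_left ?_ hκb.le
          have h3 : R*|p.1/(1+p.1) - q.1/(1+q.1)| ≤ R*|p.1 - q.1| :=
            mul_le_mul_of_nonneg_left hdh hR0.le
          have h4 : R*|p.1 - q.1| ≤ R*d := mul_le_mul_of_nonneg_left hdu hR0.le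
          linarith only [e2, h3, h4, hdu]
        have ha2 : |μb*(p.1*p.2 - q.1*q.2) + βb*(p.2 - q.2)|
            ≤ μb*(R*d + R*d) + βb*d := by
          refine (abs_add_le _ _).trans ?_
          rw [abs_mul, abs_of_nonneg hμb, abs_mul, abs_of_nonneg hβb.le]
          have s1 : μb * |p.1*p.2 - q.1*q.2| ≤ μb * (R*d + R*d) := by
            refine (mul_le_mul_of_nonneg_left e1 hμb).trans
              (mul_le_mul_of_nonneg_left ?_ hμb)
            have h3 : R*|p.1-q.1| ≤ R*d := mul_le_mul_of_nonneg_left hdu hR0.le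
            have h4 : R*|p.2-q.2| ≤ R*d := mul_le_mul_of_nonneg_left hdv hR0.le
            linarith only [h3, h4]
          have s2 : βb * |p.2 - q.2| ≤ βb * d := mul_le_mul_of_nonneg_left hdv hβb.le
          linarith only [s1, s2]
        have final : κb * ((1 + R) * d) + (μb*(R*d + R*d) + βb*d) ≤ Kr * d := by
          rw [hKrdef]
          exact aux_finB hμb hμs hκb.le hβb.le hMs hR0.le hd0
        exact le_trans (add_le_add ha1 ha2) final
    -- solutions as curves in ℝ × ℝ
    have pairs : ∀ (φa ya : ℝ → ℝ),
        (∀ s ∈ Ici (0:ℝ),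
          HasDerivWithinAt φa (-(μb * φa s * ya s) - μs * φa s * c s) (Ici 0) s) →
        (∀ s ∈ Ici (0:ℝ),
          HasDerivWithinAt ya
            (κb * (φa s / (1 + φa s)) * (1 - φa s) - (μb * φa s + βb) * ya s) (Ici 0) s) →
        ∀ s ∈ Ico (0:ℝ) t,
          HasDerivWithinAt (fun r => (φa r, ya r)) (v s (φa s, ya s)) (Ici s) s := by
      intro φa ya had hyad s hs
      have hp := ((had s hs.1).mono (Ici_subset_Ici.mpr hs.1)).prodMk
        ((hyad s hs.1).mono (Ici_subset_Ici.mpr hs.1))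
      have hval : v s (φa s, ya s)
          = (-(μb * φa s * ya s) - μs * φa s * c s,
             κb * (φa s / (1 + φa s)) * (1 - φa s) - (μb * φa s + βb) * ya s) := by
        simp only [hvdef]
        rw [hct_eq s hs.1]
      rw [hval]
      exact hp
    have huniq := ODE_solution_unique_of_mem_Icc_right (v := v) (s := fun _ => D)
      (K := Kr.toNNReal) (f := fun r => (φ₁ r, y₁ r)) (g := fun r => (φ₂ r, y₂ r))
      (a := 0) (b := t)
      (fun s _ => hlipD s)
      (hc1φ.prodMk hc1y)
      (pairs φ₁ y₁ h1d h1yd)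
      (fun s hs => ⟨⟨hm1 s ⟨hs.1, hs.2.le⟩, le_of_abs_le (hb1φ s ⟨hs.1, hs.2.le⟩)⟩,
        neg_le_of_abs_le (hb1y s ⟨hs.1, hs.2.le⟩), le_of_abs_le (hb1y s ⟨hs.1, hs.2.le⟩)⟩)
      (hc2φ.prodMk hc2y)
      (pairs φ₂ y₂ h2d h2yd)
      (fun s hs => ⟨⟨hm2 s ⟨hs.1, hs.2.le⟩, le_of_abs_le (hb2φ s ⟨hs.1, hs.2.le⟩)⟩,
        neg_le_of_abs_le (hb2y s ⟨hs.1, hs.2.le⟩), le_of_abs_le (hb2y s ⟨hs.1, hs.2.le⟩)⟩)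
      (by simp only [Prod.mk.injEq]; exact ⟨by rw [h10, h20], by rw [h1y0, h2y0]⟩)
    have hfinal := huniq (right_mem_Icc.mpr ht)
    exact ⟨congrArg Prod.fst hfinal, congrArg Prod.snd hfinal⟩
end

section
/- Let μ_b, μ_s ≥ 0, κ_b, β_b > 0, δ_s ≥ 0, M_{b,0} ≥ 0 and δ₀ ∈ (0,1], and let c : [0,∞) → ℝ be continuous and nonnegative. Suppose φ, y, s : [0,∞) → ℝ are differentiable and satisfy, for all t ≥ 0, φ'(t) = −(1−s(t)) μ_b φ(t) y(t) − (1−s(t)) μ_s φ(t) c(t), y'(t) = κ_b·(φ(t)/(1+φ(t)))·(1−φ(t)) − ((1−s(t)) μ_b φ(t) + β_b)·y(t), and s'(t) = −δ_s y(t) s(t), with initial data δ₀ ≤ φ(0) ≤ 1, 0 ≤ y(0) ≤ M_{b,0}, and 0 ≤ s(0) ≤ 1. Then for all t ≥ 0: 0 < φ(t) ≤ 1, 0 ≤ y(t) ≤ max{M_{b,0}, κ_b/β_b}, and 0 ≤ s(t) ≤ 1. -/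
/-!
The box `0 < φ ≤ 1`, `0 ≤ y ≤ M`, `0 ≤ s ≤ 1` (with `M = max M_{b,0} (κ_b/β_b)`) is invariant
because the vector field points weakly into it on each face. To make it point strictly inward,
relax the faces by `ε e^{Λt}` and replace `φ > 0` by `φ ≥ (φ(0)/2) e^{-Λt}`, where on a bounded
time interval `[0, T]` the rate `Λ` dominates the size of the field (this is where a bound for
`c` on `[0, T]` enters). A first-exit argument keeps the solution inside the relaxed box up to
time `T`, and letting `ε → 0` gives the bounds at `T`.
-/

open Set Filter Topology Real

theorem IsMinOn.hasDerivWithinAt_Icc_right_nonpos {f : ℝ → ℝ} {a b f' : ℝ} (hab : a < b)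
    (hmin : IsMinOn f (Icc a b) b) (hf : HasDerivWithinAt f f' (Icc a b) b) : f' ≤ 0 := by
  have hcone : a - b ∈ posTangentConeAt (Icc a b) b :=
    sub_mem_posTangentConeAt_of_segment_subset (by rw [segment_symm, segment_eq_Icc hab.le])
  have h := hmin.localize.hasFDerivWithinAt_nonneg hf hcone
  rw [ContinuousLinearMap.toSpanSingleton_apply, smul_eq_mul] at h
  nlinarith

theorem forall_pos_of_hasDerivWithinAt_pos_of_eq_zero {ι : Type*} [Finite ι] {g : ι → ℝ → ℝ}
    {a b : ℝ} (hg : ∀ i, ContinuousOn (g i) (Icc a b)) (ha : ∀ i, 0 < g i a)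
    (hcontact : ∀ τ ∈ Ioc a b, ∀ i, (∀ j, 0 ≤ g j τ) → g i τ = 0 →
      ∃ d > 0, HasDerivWithinAt (g i) d (Icc a τ) τ) :
    ∀ t ∈ Icc a b, ∀ i, 0 < g i t := by
  by_contra! hbad
  obtain ⟨t, ht, i, hi⟩ := hbad
  set S := ⋃ i, Icc a b ∩ g i ⁻¹' Iic 0
  have hS : IsCompact S :=
    isCompact_Icc.of_isClosed_subset
      (isClosed_iUnion_of_finite fun i =>
        (hg i).preimage_isClosed_of_isClosed isClosed_Icc isClosed_Iic)
      (iUnion_subset fun i => inter_subset_left)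
  obtain ⟨τ, hτS, hτleast⟩ := hS.exists_isLeast ⟨t, mem_iUnion.2 ⟨i, ht, hi⟩⟩
  obtain ⟨k, hτab, hkτ⟩ := mem_iUnion.1 hτS
  have hbefore : ∀ u ∈ Ico a τ, ∀ j, 0 < g j u := fun u hu j => by
    by_contra! h
    exact (hτleast (mem_iUnion.2 ⟨j, ⟨hu.1, hu.2.le.trans hτab.2⟩, h⟩)).not_gt hu.2
  have haτ : a < τ := hτab.1.lt_of_ne fun h => (ha k).not_ge (h ▸ hkτ)
  have hnonneg : ∀ j, ∀ u ∈ Icc a τ, 0 ≤ g j u := fun j => by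
    have hclosed := ((hg j).mono (Icc_subset_Icc_right hτab.2)).preimage_isClosed_of_isClosed
      isClosed_Icc (isClosed_Ici (a := 0))
    have := hclosed.closure_subset_iff.2 fun u hu => ⟨Ico_subset_Icc_self hu, (hbefore u hu j).le⟩
    rw [closure_Ico haτ.ne] at this
    exact fun u hu => (this hu).2
  have hkτ0 : g k τ = 0 := le_antisymm hkτ (hnonneg k τ (right_mem_Icc.2 haτ.le))
  obtain ⟨d, hd, hder⟩ :=
    hcontact τ ⟨haτ, hτab.2⟩ k (fun j => hnonneg j τ (right_mem_Icc.2 haτ.le)) hkτ0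
  exact hd.not_ge <| IsMinOn.hasDerivWithinAt_Icc_right_nonpos haτ
    (fun u hu => by simpa [hkτ0] using hnonneg k u hu) hder

theorem le_of_eventually_lt_add_mul {a b K : ℝ} (h : ∀ᶠ ε in 𝓝[>] (0 : ℝ), a < b + ε * K) :
    a ≤ b := by
  have hlim : Tendsto (fun ε => b + ε * K) (𝓝[>] 0) (𝓝 b) := by
    have : Tendsto (fun ε => b + ε * K) (𝓝 0) (𝓝 (b + 0 * K)) :=
      (continuous_const.add (continuous_id.mul continuous_const)).tendsto 0
    simpa using this.mono_left nhdsWithin_le_nhds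
  exact ge_of_tendsto hlim (h.mono fun _ => le_of_lt)

theorem hasDerivAt_const_mul_exp_mul (ε Λ t : ℝ) :
    HasDerivAt (fun t => ε * exp (Λ * t)) (Λ * (ε * exp (Λ * t))) t := by
  simpa [mul_comm, mul_left_comm] using ((hasDerivAt_id t).const_mul Λ).exp.const_mul ε

theorem neg_le_degradation_rate {μb μs M C e s y c : ℝ} (hμb : 0 ≤ μb) (hμs : 0 ≤ μs)
    (he : 0 ≤ e) (he1 : e ≤ 1) (hs : -e ≤ s) (hs' : s ≤ 1 + e) (hy : -e ≤ y) (hy' : y ≤ M + e)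
    (hc : 0 ≤ c) (hc' : c ≤ C) :
    -(e * (μb * (M + 4) + μs * C)) ≤ (1 - s) * (μb * y + μs * c) := by
  nlinarith [mul_nonneg (by linarith : 0 ≤ 1 + e - s)
      (by nlinarith : 0 ≤ μb * y + μs * c + μb * e),
    mul_le_mul_of_nonneg_left hs' (mul_nonneg hμb he),
    mul_le_mul_of_nonneg_left hy' (mul_nonneg hμb he),
    mul_le_mul_of_nonneg_left hc' (mul_nonneg hμs he),
    mul_le_mul_of_nonneg_left he1 (mul_nonneg hμb he), mul_nonneg hμs hc, mul_nonneg hμb he]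

theorem degradation_rate_le {μb μs M C e s y c : ℝ} (hμb : 0 ≤ μb) (hμs : 0 ≤ μs) (hM : 0 ≤ M)
    (he : 0 ≤ e) (he1 : e ≤ 1) (hs : -e ≤ s) (hs' : s ≤ 1 + e) (hy : -e ≤ y) (hy' : y ≤ M + e)
    (hc : 0 ≤ c) (hc' : c ≤ C) :
    (1 - s) * (μb * y + μs * c) ≤ 2 * (μb * (M + 4) + μs * C) := by
  nlinarith [mul_nonneg (by linarith : 0 ≤ s + e) (by nlinarith : 0 ≤ μb * y + μs * c + μb * e),
    mul_le_mul_of_nonneg_left hy' hμb, mul_le_mul_of_nonneg_left hc' hμs,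
    mul_le_mul_of_nonneg_left hs' (mul_nonneg hμb he),
    mul_le_mul_of_nonneg_left he1 (mul_nonneg hμb he), mul_nonneg hμs hc, mul_nonneg hμb he,
    mul_nonneg hμb hM]

theorem hill_mul_one_sub_le_one {φ : ℝ} (hφ : 0 ≤ φ) : φ / (1 + φ) * (1 - φ) ≤ 1 := by
  rw [div_mul_eq_mul_div, div_le_one (by linarith)]
  nlinarith

theorem neg_le_hill_mul_one_sub {φ e : ℝ} (hφ : 0 ≤ φ) (he : 0 ≤ e) (hφe : φ ≤ 1 + e) :
    -e ≤ φ / (1 + φ) * (1 - φ) := by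
  rw [div_mul_eq_mul_div, le_div_iff₀ (by linarith)]
  nlinarith

theorem ecm_upper_contact_pos {μb μs K Λ e φ y s c : ℝ} (hK : 0 ≤ K) (hΛ : 2 * K < Λ)
    (he : 0 < e) (hφ : 0 < φ) (hφ2 : φ ≤ 2) (hρ : -(e * K) ≤ (1 - s) * (μb * y + μs * c)) :
    0 < Λ * e - (-((1 - s) * μb * φ * y) - (1 - s) * μs * φ * c) := by
  nlinarith [mul_le_mul_of_nonneg_right hρ hφ.le,
    mul_le_mul_of_nonneg_left hφ2 (mul_nonneg he.le hK)]

theorem ecm_lower_contact_pos {μb μs K Λ φ y s c : ℝ} (hΛ : 2 * K < Λ) (hφ : 0 < φ)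
    (hρ : (1 - s) * (μb * y + μs * c) ≤ 2 * K) :
    0 < -((1 - s) * μb * φ * y) - (1 - s) * μs * φ * c - -Λ * φ := by
  nlinarith [mul_lt_mul_of_pos_left (hρ.trans_lt hΛ) hφ]

theorem boundMMP_lower_contact_pos {κb βb μb Λ e φ y s : ℝ} (hκb : 0 ≤ κb) (hβb : 0 ≤ βb)
    (hμb : 0 ≤ μb) (hΛ : κb + 2 * μb < Λ) (he : 0 < e) (he1 : e ≤ 1) (hφ : 0 < φ)
    (hφe : φ ≤ 1 + e) (hs : s ≤ 1 + e) (hy : y = -e) :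
    0 < κb * (φ / (1 + φ)) * (1 - φ) - ((1 - s) * μb * φ + βb) * y + Λ * e := by
  have hhill := mul_le_mul_of_nonneg_left (neg_le_hill_mul_one_sub hφ.le he.le hφe) hκb
  have hloss : -(2 * μb) ≤ (1 - s) * μb * φ := by
    nlinarith [mul_nonneg (mul_nonneg (by linarith : 0 ≤ 1 - s + e) hμb) hφ.le,
      mul_le_mul_of_nonneg_left hφe (mul_nonneg he.le hμb), mul_nonneg hμb he.le]
  subst hy
  nlinarith [mul_le_mul_of_nonneg_right hloss he.le, mul_nonneg hβb he.le]

theorem boundMMP_upper_contact_pos {κb βb μb M Λ e φ y s : ℝ} (hκb : 0 ≤ κb) (hβb : 0 ≤ βb)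
    (hμb : 0 ≤ μb) (hM : 0 ≤ M) (hκM : κb ≤ βb * M) (hΛ : 2 * μb * (M + 1) < Λ) (he : 0 < e)
    (he1 : e ≤ 1) (hφ : 0 < φ) (hφ2 : φ ≤ 2) (hs : s ≤ 1 + e) (hy : y = M + e) :
    0 < Λ * e - (κb * (φ / (1 + φ)) * (1 - φ) - ((1 - s) * μb * φ + βb) * y) := by
  have hhill := mul_le_mul_of_nonneg_left (hill_mul_one_sub_le_one hφ.le) hκb
  have hloss : -(2 * μb * e) ≤ (1 - s) * μb * φ := by
    nlinarith [mul_nonneg (mul_nonneg (by linarith : 0 ≤ 1 - s + e) hμb) hφ.le,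
      mul_le_mul_of_nonneg_left hφ2 (mul_nonneg he.le hμb)]
  subst hy
  nlinarith [mul_le_mul_of_nonneg_right hloss (by linarith : 0 ≤ M + e),
    mul_le_mul_of_nonneg_left he1 (mul_nonneg (mul_nonneg hμb he.le) (by norm_num : (0:ℝ) ≤ 2)),
    mul_nonneg hβb he.le]

theorem suitability_lower_contact_pos {δs Λ e y s : ℝ} (hδs : 0 ≤ δs) (hΛ : δs < Λ) (he : 0 < e)
    (he1 : e ≤ 1) (hy : -e ≤ y) (hs : s = -e) : 0 < -(δs * y * s) + Λ * e := by
  subst hs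
  nlinarith [mul_le_mul_of_nonneg_left hy (mul_nonneg hδs he.le),
    mul_le_mul_of_nonneg_left he1 (mul_nonneg hδs he.le)]

theorem suitability_upper_contact_pos {δs Λ e y s : ℝ} (hδs : 0 ≤ δs) (hΛ : 2 * δs < Λ)
    (he : 0 < e) (he1 : e ≤ 1) (hy : -e ≤ y) (hs : s = 1 + e) : 0 < Λ * e - -(δs * y * s) := by
  subst hs
  nlinarith [mul_le_mul_of_nonneg_left hy (mul_nonneg hδs (by linarith : (0:ℝ) ≤ 1 + e)),
    mul_le_mul_of_nonneg_left he1 (mul_nonneg hδs he.le)]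

structure IsInvasionSolution (μb μs κb βb δs : ℝ) (c φ y s : ℝ → ℝ) : Prop where
  hasDerivWithinAt_ecm : ∀ t ∈ Ici (0 : ℝ),
    HasDerivWithinAt φ (-((1 - s t) * μb * φ t * y t) - (1 - s t) * μs * φ t * c t) (Ici 0) t
  hasDerivWithinAt_boundMMP : ∀ t ∈ Ici (0 : ℝ),
    HasDerivWithinAt y
      (κb * (φ t / (1 + φ t)) * (1 - φ t) - ((1 - s t) * μb * φ t + βb) * y t) (Ici 0) t
  hasDerivWithinAt_suitability : ∀ t ∈ Ici (0 : ℝ),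
    HasDerivWithinAt s (-(δs * y t * s t)) (Ici 0) t

noncomputable def relaxedBoxGaps (φ y s : ℝ → ℝ) (M φ₀ Λ ε : ℝ) : Fin 6 → ℝ → ℝ :=
  ![fun t => 1 + ε * exp (Λ * t) - φ t,
    fun t => φ t - φ₀ * exp (-(Λ * t)),
    fun t => y t + ε * exp (Λ * t),
    fun t => M + ε * exp (Λ * t) - y t,
    fun t => s t + ε * exp (Λ * t),
    fun t => 1 + ε * exp (Λ * t) - s t]

namespace IsInvasionSolution

variable {μb μs κb βb δs M C φ₀ Λ ε : ℝ} {c φ y s : ℝ → ℝ}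

theorem exists_hasDerivWithinAt_pos_of_relaxedBoxGaps_eq_zero
    (hsol : IsInvasionSolution μb μs κb βb δs c φ y s) (hμb : 0 ≤ μb) (hμs : 0 ≤ μs)
    (hκb : 0 ≤ κb) (hβb : 0 ≤ βb) (hδs : 0 ≤ δs) (hM : 0 ≤ M) (hκM : κb ≤ βb * M)
    (hΛ : κb + 2 * δs + 2 * (μb * (M + 4) + μs * C) < Λ) (hφ₀ : 0 < φ₀) {τ : ℝ} (hτ : 0 ≤ τ)
    (hcτ : 0 ≤ c τ) (hcC : c τ ≤ C) (he : 0 < ε * exp (Λ * τ)) (he1 : ε * exp (Λ * τ) ≤ 1)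
    (i : Fin 6) (hgaps : ∀ j, 0 ≤ relaxedBoxGaps φ y s M φ₀ Λ ε j τ)
    (hi : relaxedBoxGaps φ y s M φ₀ Λ ε i τ = 0) :
    ∃ d > 0, HasDerivWithinAt (relaxedBoxGaps φ y s M φ₀ Λ ε i) d (Icc 0 τ) τ := by
  have hφ := (hsol.hasDerivWithinAt_ecm τ hτ).mono (Icc_subset_Ici_self : Icc 0 τ ⊆ Ici 0)
  have hy := (hsol.hasDerivWithinAt_boundMMP τ hτ).mono (Icc_subset_Ici_self : Icc 0 τ ⊆ Ici 0)
  have hs := (hsol.hasDerivWithinAt_suitability τ hτ).mono (Icc_subset_Ici_self : Icc 0 τ ⊆ Ici 0)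
  have hE := (hasDerivAt_const_mul_exp_mul ε Λ τ).hasDerivWithinAt (s := Icc 0 τ)
  have hB : HasDerivAt (fun t => φ₀ * exp (-(Λ * t))) (-Λ * (φ₀ * exp (-(Λ * τ)))) τ := by
    simpa only [neg_mul] using hasDerivAt_const_mul_exp_mul φ₀ (-Λ) τ
  simp only [Fin.forall_fin_succ, relaxedBoxGaps, Fin.isValue, Matrix.cons_val_zero,
    Matrix.cons_val_succ, IsEmpty.forall_iff, and_true, sub_nonneg] at hgaps
  obtain ⟨g0, g1, g2, g3, g4, g5⟩ := hgaps
  have hμbM := mul_nonneg hμb hM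
  have hμsC := mul_nonneg hμs (hcτ.trans hcC)
  have hφτ : 0 < φ τ := lt_of_lt_of_le (by positivity) g1
  have hρ := neg_le_degradation_rate hμb hμs he.le he1 (by linarith) g5 (by linarith) g3 hcτ hcC
  have hρ' := degradation_rate_le hμb hμs hM he.le he1 (by linarith) g5 (by linarith) g3 hcτ hcC
  fin_cases i <;>
    simp only [relaxedBoxGaps, Fin.zero_eta, Fin.mk_one, Fin.reduceFinMk, Fin.isValue,
      Matrix.cons_val, Matrix.cons_val_zero, Matrix.cons_val_one] at hi ⊢
  · exact ⟨_, ecm_upper_contact_pos (by linarith) (by linarith) he hφτ (by linarith) hρ,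
      (hE.const_add 1).sub hφ⟩
  · refine ⟨_, ?_, hφ.sub hB.hasDerivWithinAt⟩
    rw [← sub_eq_zero.1 hi]
    exact ecm_lower_contact_pos (by linarith) hφτ hρ'
  · exact ⟨_, boundMMP_lower_contact_pos hκb hβb hμb (by linarith) he he1 hφτ g0 g5
      (by linarith), hy.add hE⟩
  · exact ⟨_, boundMMP_upper_contact_pos hκb hβb hμb hM hκM (by linarith) he he1 hφτ
      (by linarith) g5 (by linarith), (hE.const_add M).sub hy⟩
  · exact ⟨_, suitability_lower_contact_pos hδs (by linarith) he he1 (by linarith) (by linarith),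
      hs.add hE⟩
  · exact ⟨_, suitability_upper_contact_pos hδs (by linarith) he he1 (by linarith) (by linarith),
      (hE.const_add 1).sub hs⟩

theorem relaxedBoxGaps_pos (hsol : IsInvasionSolution μb μs κb βb δs c φ y s) (hμb : 0 ≤ μb)
    (hμs : 0 ≤ μs) (hκb : 0 ≤ κb) (hβb : 0 ≤ βb) (hδs : 0 ≤ δs) (hM : 0 ≤ M)
    (hκM : κb ≤ βb * M) {T : ℝ} (hc : ∀ t ∈ Icc 0 T, 0 ≤ c t ∧ c t ≤ C)
    (hΛ : κb + 2 * δs + 2 * (μb * (M + 4) + μs * C) < Λ) (hε : 0 < ε)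
    (hεT : ε * exp (Λ * T) ≤ 1) (hφ₀ : 0 < φ₀) (hφ0 : φ₀ < φ 0) (hφ0' : φ 0 ≤ 1)
    (hy0 : 0 ≤ y 0) (hy0' : y 0 ≤ M) (hs0 : 0 ≤ s 0) (hs0' : s 0 ≤ 1) :
    ∀ t ∈ Icc 0 T, ∀ i, 0 < relaxedBoxGaps φ y s M φ₀ Λ ε i t := by
  have hφc : ContinuousOn φ (Icc 0 T) := fun t ht =>
    (hsol.hasDerivWithinAt_ecm t ht.1).continuousWithinAt.mono Icc_subset_Ici_self
  have hyc : ContinuousOn y (Icc 0 T) := fun t ht =>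
    (hsol.hasDerivWithinAt_boundMMP t ht.1).continuousWithinAt.mono Icc_subset_Ici_self
  have hsc : ContinuousOn s (Icc 0 T) := fun t ht =>
    (hsol.hasDerivWithinAt_suitability t ht.1).continuousWithinAt.mono Icc_subset_Ici_self
  refine forall_pos_of_hasDerivWithinAt_pos_of_eq_zero (fun i => ?_) (fun i => ?_) ?_
  · fin_cases i <;>
      simp only [relaxedBoxGaps, Fin.zero_eta, Fin.mk_one, Fin.reduceFinMk, Fin.isValue,
        Matrix.cons_val, Matrix.cons_val_zero, Matrix.cons_val_one] <;> fun_prop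
  · fin_cases i <;>
      simp only [relaxedBoxGaps, Fin.zero_eta, Fin.mk_one, Fin.reduceFinMk, Fin.isValue,
        Matrix.cons_val, Matrix.cons_val_zero, Matrix.cons_val_one, mul_zero, neg_zero, exp_zero,
        mul_one] <;> linarith
  · intro τ hτ
    obtain ⟨hcτ, hcC⟩ := hc τ (Ioc_subset_Icc_self hτ)
    have hΛ0 : 0 ≤ Λ := by nlinarith [mul_nonneg hμs hcτ, mul_nonneg hμb hM]
    exact hsol.exists_hasDerivWithinAt_pos_of_relaxedBoxGaps_eq_zero hμb hμs hκb hβb hδs hM hκM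
      hΛ hφ₀ hτ.1.le hcτ hcC (mul_pos hε (exp_pos _))
      (hεT.trans' (mul_le_mul_of_nonneg_left (exp_le_exp.2 (by nlinarith [hτ.2])) hε.le))

end IsInvasionSolution

theorem heterogeneous_suitability_invariant_region_general
    (μb μs κb βb δs Mb0 δ₀ : ℝ)
    (hμb : 0 ≤ μb) (hμs : 0 ≤ μs) (hκb : 0 < κb) (hβb : 0 < βb)
    (hδs : 0 ≤ δs) (hδ₀ : 0 < δ₀)
    (c φ y s : ℝ → ℝ)
    (hc_cont : ContinuousOn c (Set.Ici 0))
    (hc_nonneg : ∀ t ∈ Set.Ici (0 : ℝ), 0 ≤ c t)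
    (hφ : ∀ t ∈ Set.Ici (0 : ℝ),
      HasDerivWithinAt φ
        (-((1 - s t) * μb * φ t * y t) - (1 - s t) * μs * φ t * c t) (Set.Ici 0) t)
    (hy : ∀ t ∈ Set.Ici (0 : ℝ),
      HasDerivWithinAt y
        (κb * (φ t / (1 + φ t)) * (1 - φ t) - ((1 - s t) * μb * φ t + βb) * y t)
        (Set.Ici 0) t)
    (hs : ∀ t ∈ Set.Ici (0 : ℝ),
      HasDerivWithinAt s (-(δs * y t * s t)) (Set.Ici 0) t)
    (hφ0 : δ₀ ≤ φ 0) (hφ0' : φ 0 ≤ 1)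
    (hy0 : 0 ≤ y 0) (hy0' : y 0 ≤ Mb0)
    (hs0 : 0 ≤ s 0) (hs0' : s 0 ≤ 1) :
    ∀ t ∈ Set.Ici (0 : ℝ),
      (0 < φ t ∧ φ t ≤ 1) ∧
      (0 ≤ y t ∧ y t ≤ max Mb0 (κb / βb)) ∧
      (0 ≤ s t ∧ s t ≤ 1) := by
  intro T hT
  obtain ⟨C, hC⟩ :=
    isCompact_Icc.bddAbove_image (hc_cont.mono (Icc_subset_Ici_self : Icc 0 T ⊆ Ici 0))
  set M := max Mb0 (κb / βb)
  have hM : y 0 ≤ M := hy0'.trans (le_max_left _ _)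
  have hκM : κb ≤ βb * M := (div_le_iff₀' hβb).1 (le_max_right _ _)
  set Λ := κb + 2 * δs + 2 * (μb * (M + 4) + μs * C) + 1
  have hbox : ∀ᶠ ε in 𝓝[>] 0, ∀ i, 0 < relaxedBoxGaps φ y s M (φ 0 / 2) Λ ε i T := by
    filter_upwards [Ioo_mem_nhdsGT (exp_pos (-(Λ * T)))] with ε hε
    refine IsInvasionSolution.relaxedBoxGaps_pos ⟨hφ, hy, hs⟩ hμb hμs hκb.le hβb.le hδs
      (hy0.trans hM) hκM (fun t ht => ⟨hc_nonneg t ht.1, hC (mem_image_of_mem c ht)⟩)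
      (by linarith) hε.1 ?_ (by linarith) (by linarith) hφ0' hy0 hM hs0 hs0' T ⟨hT, le_rfl⟩
    rw [← le_div_iff₀ (exp_pos _), one_div, ← exp_neg]
    exact hε.2.le
  simp only [Fin.forall_fin_succ, relaxedBoxGaps, Matrix.cons_val_zero, Matrix.cons_val_succ,
    IsEmpty.forall_iff, and_true, eventually_and] at hbox
  obtain ⟨hφ_le, hφ_pos, hy_nonneg, hy_le, hs_nonneg, hs_le⟩ := hbox
  refine ⟨⟨?_, ?_⟩, ⟨?_, ?_⟩, ?_, ?_⟩
  · obtain ⟨_, h⟩ := hφ_pos.exists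
    exact lt_of_le_of_lt (mul_nonneg (by linarith) (exp_pos _).le) (sub_pos.1 h)
  · exact le_of_eventually_lt_add_mul (hφ_le.mono fun _ => sub_pos.1)
  · exact le_of_eventually_lt_add_mul hy_nonneg
  · exact le_of_eventually_lt_add_mul (hy_le.mono fun _ => sub_pos.1)
  · exact le_of_eventually_lt_add_mul hs_nonneg
  · exact le_of_eventually_lt_add_mul (hs_le.mono fun _ => sub_pos.1)

/-- invariant region for the heterogeneous matrix-suitability model:
φ' = −(1−s) μ_b φ y − (1−s) μ_s φ c,
y' = κ_b·(φ/(1+φ))·(1−φ) − ((1−s) μ_b φ + β_b) y,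
s' = −δ_s y s, with c continuous nonnegative and initial data
δ₀ ≤ φ(0) ≤ 1, 0 ≤ y(0) ≤ M_{b,0}, 0 ≤ s(0) ≤ 1. Then for all t ≥ 0 one has
0 < φ(t) ≤ 1, 0 ≤ y(t) ≤ max{M_{b,0}, κ_b/β_b} and 0 ≤ s(t) ≤ 1. -/
theorem heterogeneous_suitability_invariant_region
    (μb μs κb βb δs Mb0 δ₀ : ℝ)
    (hμb : 0 ≤ μb) (hμs : 0 ≤ μs) (hκb : 0 < κb) (hβb : 0 < βb)
    (hδs : 0 ≤ δs) (hMb0 : 0 ≤ Mb0) (hδ₀ : 0 < δ₀) (hδ₀' : δ₀ ≤ 1)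
    (c φ y s : ℝ → ℝ)
    (hc_cont : ContinuousOn c (Set.Ici 0))
    (hc_nonneg : ∀ t ∈ Set.Ici (0 : ℝ), 0 ≤ c t)
    (hφ : ∀ t ∈ Set.Ici (0 : ℝ),
      HasDerivWithinAt φ
        (-((1 - s t) * μb * φ t * y t) - (1 - s t) * μs * φ t * c t) (Set.Ici 0) t)
    (hy : ∀ t ∈ Set.Ici (0 : ℝ),
      HasDerivWithinAt y
        (κb * (φ t / (1 + φ t)) * (1 - φ t) - ((1 - s t) * μb * φ t + βb) * y t)
        (Set.Ici 0) t)
    (hs : ∀ t ∈ Set.Ici (0 : ℝ),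
      HasDerivWithinAt s (-(δs * y t * s t)) (Set.Ici 0) t)
    (hφ0 : δ₀ ≤ φ 0) (hφ0' : φ 0 ≤ 1)
    (hy0 : 0 ≤ y 0) (hy0' : y 0 ≤ Mb0)
    (hs0 : 0 ≤ s 0) (hs0' : s 0 ≤ 1) :
    ∀ t ∈ Set.Ici (0 : ℝ),
      (0 < φ t ∧ φ t ≤ 1) ∧
      (0 ≤ y t ∧ y t ≤ max Mb0 (κb / βb)) ∧
      (0 ≤ s t ∧ s t ≤ 1) :=
  heterogeneous_suitability_invariant_region_general μb μs κb βb δs Mb0 δ₀ hμb hμs hκb hβb hδs hδ₀ c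
    φ y s hc_cont hc_nonneg hφ hy hs hφ0 hφ0' hy0 hy0' hs0 hs0'
end
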